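/- arXiv:2512.23549 — 7 statements merged into one kernel-verified Lean document; each statement's English description precedes it below -/
import Mathlib

section
/- Let L be a number field, j₀ ∈ L ∖ {0, 1728}, and z₀ := 1 − 1728/j₀. Let E₀ over L be the elliptic curve y² = x³ − (1/(48 z₀³)) x + 1/(864 z₀⁴) and let E₁ over L(√z₀) be the elliptic curve y² + xy = x³ − (1 − √z₀)/864. Then E₀ and E₁ are isomorphic over L(⁴√z₀), and they are isomorphic over L(√z₀) if and only if L(√z₀) = L(⁴√z₀). -/
noncomputable section

open scoped NumberField

open Finset in
/-- The Pochhammer symbol `(a)_n = a (a+1) ⋯ (a+n-1)` of a rational number. -/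
def poch (a : ℚ) (n : ℕ) : ℚ := ∏ i ∈ Finset.range n, (a + i)

/-- The `m`-th coefficient of the hypergeometric series `₂F₁((1/6, 5/6); (1); z)`. -/
def hg21 (m : ℕ) : ℚ := (poch (1/6) m * poch (5/6) m) / (poch 1 m * m.factorial)

/-- The `m`-th coefficient of the hypergeometric series `₃F₂((1/2, 1/6, 5/6); (1, 1); z)`. -/
def hg32 (m : ℕ) : ℚ :=
  (poch (1/2) m * poch (1/6) m * poch (5/6) m) / (poch 1 m * poch 1 m * m.factorial)

/-- The truncation at `z^r` of `₂F₁((1/6, 5/6); (1); z)`, evaluated in a field via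
the canonical (partial) map from `ℚ`. -/
def trunc21 {L : Type*} [DivisionRing L] (z : L) (r : ℕ) : L :=
  ∑ m ∈ Finset.range (r + 1), (hg21 m : L) * z ^ m

/-- The truncation at `z^r` of `₃F₂((1/2, 1/6, 5/6); (1, 1); z)`. -/
def trunc32 {L : Type*} [DivisionRing L] (z : L) (r : ℕ) : L :=
  ∑ m ∈ Finset.range (r + 1), (hg32 m : L) * z ^ m

/-- `a ∈ L` is `𝔭`-integral and reduces to `0` in the residue field at `𝔭`:
it can be written as `x/y` with `x ∈ 𝔭` and `y ∉ 𝔭`. -/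
def ZeroMod {L : Type*} [Field L] [NumberField L] (P : Ideal (𝓞 L)) (a : L) : Prop :=
  ∃ x y : 𝓞 L, y ∉ P ∧ x ∈ P ∧ a * algebraMap (𝓞 L) L y = algebraMap (𝓞 L) L x

/-- Two `𝔭`-integral elements of `L` have the same image in the residue field at `𝔭`. -/
def CongMod {L : Type*} [Field L] [NumberField L] (P : Ideal (𝓞 L)) (a b : L) : Prop := ZeroMod P (a - b)

/-- `a ∈ L` is `𝔭`-integral with `v_𝔭(a) = 0`: it can be written as `x/y` with `x, y ∉ 𝔭`. -/
def ValZero {L : Type*} [Field L] [NumberField L] (P : Ideal (𝓞 L)) (a : L) : Prop :=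
  ∃ x y : 𝓞 L, y ∉ P ∧ x ∉ P ∧ a * algebraMap (𝓞 L) L y = algebraMap (𝓞 L) L x

/-- `a ∈ L` is `𝔭`-integral and reduces to a square in the residue field at `𝔭`. -/
def IsSquareMod {L : Type*} [Field L] [NumberField L] (P : Ideal (𝓞 L)) (a : L) : Prop :=
  ∃ x y c : 𝓞 L, y ∉ P ∧ a * algebraMap (𝓞 L) L y = algebraMap (𝓞 L) L x ∧ x * y - c ^ 2 ∈ P

open scoped Classical in
/-- The quadratic residue symbol `(a | 𝔭)` for a `𝔭`-integral element `a` of `L`: it is `0` if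
`a` reduces to `0` in the residue field `𝔽_𝔭`, `1` if `a` reduces to a nonzero square in `𝔽_𝔭`,
and `-1` otherwise. -/
def quadSym {L : Type*} [Field L] [NumberField L] (P : Ideal (𝓞 L)) (a : L) : ℤ :=
  if ZeroMod P a then 0 else if IsSquareMod P a then 1 else -1

/-- The j-invariant of a Weierstrass curve with nonzero discriminant over a field. -/
def jInv {K : Type*} [Field K] (W : WeierstrassCurve K) : K := W.c₄ ^ 3 / W.Δ

/-- Two Weierstrass curves over `K` are isomorphic, i.e. related by an invertible change of
Weierstrass variables over `K`. -/
def IsoOver {K : Type*} [CommRing K] (W₁ W₂ : WeierstrassCurve K) : Prop :=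
  ∃ C : WeierstrassCurve.VariableChange K, C • W₁ = W₂

/-- `W` is a Weierstrass model with integral coefficients of the elliptic curve `E` over `L`
having good reduction at the prime `P`: `W` is isomorphic to `E` over `L` and the reduction
of `W` modulo `P` is nonsingular. -/
def IsGoodModel {L : Type*} [Field L] [NumberField L] (P : Ideal (𝓞 L)) (E : WeierstrassCurve L) (W : WeierstrassCurve (𝓞 L)) :
    Prop :=
  IsoOver (W.map (algebraMap (𝓞 L) L)) E ∧ (W.map (Ideal.Quotient.mk P)).Δ ≠ 0

/-- The trace of Frobenius `a_𝔭 = N(𝔭) + 1 - #Ẽ(𝔽_𝔭)` attached to (a good model `W` at `𝔭` of)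
an elliptic curve over `L`. -/
def ap {L : Type*} [Field L] [NumberField L] (P : Ideal (𝓞 L)) (W : WeierstrassCurve (𝓞 L)) : ℤ :=
  (Ideal.absNorm P : ℤ) + 1
    - Nat.card (WeierstrassCurve.Affine.Point (W.map (Ideal.Quotient.mk P)).toAffine)



section Aux

variable {F : Type*} [Field F] [CharZero F]

lemma iso_aux (u : F) (hu : u ≠ 0) :
    IsoOver (⟨0, 0, 0, -(1 / (48 * (u ^ 4) ^ 3)), 1 / (864 * (u ^ 4) ^ 4)⟩ :
        WeierstrassCurve F) ⟨1, 0, 0, 0, -((1 - u ^ 2) / 864)⟩ := by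
  refine ⟨⟨(Units.mk0 u hu)⁻¹ ^ 3, (u ^ 6)⁻¹ / 12, u⁻¹ ^ 3 / 2, 0⟩, ?_⟩
  have hD : ((u : F) ^ 4) ^ 4 * 864 * (u ^ 6 * 12 * ((u ^ 4) ^ 3 * 48)) ≠ 0 := by norm_num [hu]
  ext <;> simp [WeierstrassCurve.variableChange_a₁, WeierstrassCurve.variableChange_a₂,
    WeierstrassCurve.variableChange_a₃, WeierstrassCurve.variableChange_a₄,
    WeierstrassCurve.variableChange_a₆] <;> field_simp <;>
    first
      | exact Or.inr (by ring)
      | ring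

lemma mapE₀ {L : Type*} [Field L] (f : L →+* F) (z : L) (w : F) (hz : f z = w ^ 4) :
    ((⟨0, 0, 0, -(1 / (48 * z ^ 3)), 1 / (864 * z ^ 4)⟩ : WeierstrassCurve L)).map f =
      ⟨0, 0, 0, -(1 / (48 * (w ^ 4) ^ 3)), 1 / (864 * (w ^ 4) ^ 4)⟩ := by
  ext <;> simp [WeierstrassCurve.map, map_div₀, map_ofNat, hz]

lemma c₄E₀ (z : F) (hz : z ≠ 0) :
    ((⟨0, 0, 0, -(1 / (48 * z ^ 3)), 1 / (864 * z ^ 4)⟩ : WeierstrassCurve F)).c₄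
      = 1 / z ^ 3 := by
  have h3 : (z : F) ^ 3 ≠ 0 := pow_ne_zero _ hz
  simp [WeierstrassCurve.c₄, WeierstrassCurve.b₂, WeierstrassCurve.b₄]
  field_simp
  ring

lemma c₆E₀ (z : F) (hz : z ≠ 0) :
    ((⟨0, 0, 0, -(1 / (48 * z ^ 3)), 1 / (864 * z ^ 4)⟩ : WeierstrassCurve F)).c₆
      = -(1 / z ^ 4) := by
  have h4 : (z : F) ^ 4 ≠ 0 := pow_ne_zero _ hz
  simp [WeierstrassCurve.c₆, WeierstrassCurve.b₂, WeierstrassCurve.b₄, WeierstrassCurve.b₆]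
  field_simp
  ring

lemma c₄E₁ (s : F) :
    ((⟨1, 0, 0, 0, -((1 - s) / 864)⟩ : WeierstrassCurve F)).c₄ = 1 := by
  simp [WeierstrassCurve.c₄, WeierstrassCurve.b₂, WeierstrassCurve.b₄]

lemma c₆E₁ (s : F) :
    ((⟨1, 0, 0, 0, -((1 - s) / 864)⟩ : WeierstrassCurve F)).c₆ = -s := by
  simp [WeierstrassCurve.c₆, WeierstrassCurve.b₂, WeierstrassCurve.b₄, WeierstrassCurve.b₆]
  ring

end Aux

universe u v w

/-- **Lemma 3.1.** Let `j₀ ∈ L ∖ {0, 1728}` and `z₀ = 1 - 1728/j₀`. Let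
`E₀ : y² = x³ - x/(48z₀³) + 1/(864z₀⁴)` over `L` and `E₁ : y² + xy = x³ - (1 - √z₀)/864` over
`K = L(√z₀)`. Then `E₀ ≅ E₁` over `M = L(⁴√z₀)`, and `E₀ ≅ E₁` over `L(√z₀)` iff
`L(√z₀) = L(⁴√z₀)` (i.e. iff `algebraMap K M` is surjective). -/
theorem statement3 (L : Type u) [Field L] [NumberField L]
    (j₀ : L) (hj0 : j₀ ≠ 0) (hj1728 : j₀ ≠ 1728)
    (K : Type v) [Field K] [Algebra L K] (s : K)
    (hs : s ^ 2 = algebraMap L K (1 - 1728 / j₀)) (hKgen : Algebra.adjoin L {s} = ⊤)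
    (M : Type w) [Field M] [Algebra L M] [Algebra K M] [IsScalarTower L K M]
    (u : M) (hu : u ^ 2 = algebraMap K M s) (hMgen : Algebra.adjoin K {u} = ⊤) :
    IsoOver ((⟨0, 0, 0, -(1 / (48 * (1 - 1728 / j₀) ^ 3)),
        1 / (864 * (1 - 1728 / j₀) ^ 4)⟩ : WeierstrassCurve L).map (algebraMap L M))
      ((⟨1, 0, 0, 0, -((1 - s) / 864)⟩ : WeierstrassCurve K).map (algebraMap K M)) ∧
    (IsoOver ((⟨0, 0, 0, -(1 / (48 * (1 - 1728 / j₀) ^ 3)),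
        1 / (864 * (1 - 1728 / j₀) ^ 4)⟩ : WeierstrassCurve L).map (algebraMap L K))
        (⟨1, 0, 0, 0, -((1 - s) / 864)⟩ : WeierstrassCurve K) ↔
      Function.Surjective (algebraMap K M)) := by
  haveI : CharZero K := charZero_of_injective_algebraMap (algebraMap L K).injective
  haveI : CharZero M := charZero_of_injective_algebraMap (algebraMap L M).injective
  set z : L := 1 - 1728 / j₀ with hzdef
  have hz : z ≠ 0 := by
    rw [hzdef, sub_ne_zero]
    intro h
    apply hj1728
    field_simp at h
    exact h
  have hzK : algebraMap L K z ≠ 0 := (map_ne_zero_iff _ (algebraMap L K).injective).mpr hz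
  have hs0 : s ≠ 0 := by
    intro h
    apply hzK
    rw [← hs, h]
    ring
  have hsM : algebraMap K M s ≠ 0 := (map_ne_zero_iff _ (algebraMap K M).injective).mpr hs0
  have hu0 : u ≠ 0 := by
    intro h
    apply hsM
    rw [← hu, h]
    ring
  constructor
  · have h0 := mapE₀ (algebraMap L M) z u (by
      rw [IsScalarTower.algebraMap_apply L K M, ← hs, map_pow, ← hu]; ring)
    have h1 : ((⟨1, 0, 0, 0, -((1 - s) / 864)⟩ : WeierstrassCurve K)).map (algebraMap K M) =
        ⟨1, 0, 0, 0, -((1 - u ^ 2) / 864)⟩ := by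
      ext <;> simp [WeierstrassCurve.map, map_div₀, map_ofNat, ← hu]
    rw [h0, h1]
    exact iso_aux u hu0
  constructor
  · rintro ⟨C, hC⟩
    have h4 := congrArg WeierstrassCurve.c₄ hC
    have h6 := congrArg WeierstrassCurve.c₆ hC
    rw [WeierstrassCurve.variableChange_c₄, WeierstrassCurve.map_c₄, c₄E₀ z hz, c₄E₁,
      map_div₀, map_one, map_pow, ← hs] at h4
    rw [WeierstrassCurve.variableChange_c₆, WeierstrassCurve.map_c₆, c₆E₀ z hz, c₆E₁,
      map_neg, map_div₀, map_one, map_pow, ← hs] at h6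
    set w : K := ((C.u⁻¹ : Kˣ) : K) with hwdef
    have hw : w ≠ 0 := Units.ne_zero _
    have e4 : w ^ 4 = s ^ 6 := by
      field_simp at h4
      linear_combination h4
    have e6 : w ^ 6 = s ^ 9 := by
      field_simp at h6
      linear_combination -h6
    have e2 : w ^ 2 = s ^ 3 := by
      have h := mul_left_cancel₀ (pow_ne_zero 4 hw)
        (show w ^ 4 * w ^ 2 = w ^ 4 * s ^ 3 by linear_combination e6 - s ^ 3 * e4)
      exact h
    have hv2 : (w / s) ^ 2 = s := by
      rw [div_pow, e2]
      field_simp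
    have h2 : u ^ 2 = (algebraMap K M (w / s)) ^ 2 := by rw [hu, ← map_pow, hv2]
    have hfac : (u - algebraMap K M (w / s)) * (u + algebraMap K M (w / s)) = 0 := by
      linear_combination h2
    have hur : u ∈ Set.range (algebraMap K M) := by
      rcases mul_eq_zero.mp hfac with h | h
      · exact ⟨w / s, (sub_eq_zero.mp h).symm⟩
      · exact ⟨-(w / s), by rw [map_neg, ← eq_neg_of_add_eq_zero_left h]⟩
    intro m
    have hm : m ∈ Algebra.adjoin K ({u} : Set M) := by rw [hMgen]; trivial
    have hle : Algebra.adjoin K ({u} : Set M) ≤ ⊥ :=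
      Algebra.adjoin_le (Set.singleton_subset_iff.mpr (Algebra.mem_bot.mpr hur))
    exact Algebra.mem_bot.mp (hle hm)
  · intro hsurj
    obtain ⟨v, hvu⟩ := hsurj u
    have hv2 : v ^ 2 = s := (algebraMap K M).injective (by rw [map_pow, hvu, hu])
    have hv0 : v ≠ 0 := by
      intro h
      apply hs0
      rw [← hv2, h]
      ring
    have h0 := mapE₀ (algebraMap L K) z v (by rw [← hs, ← hv2]; ring)
    have h1 : (⟨1, 0, 0, 0, -((1 - s) / 864)⟩ : WeierstrassCurve K) =
        ⟨1, 0, 0, 0, -((1 - v ^ 2) / 864)⟩ := by rw [hv2]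
    rw [h0, h1]
    exact iso_aux v hv0


end
end

section
/- Let p be a rational prime with p ∤ 6 and let l be a positive integer. Then for every integer r with 0 ≤ r ≤ (p^l − 1)/6, one has the congruence of integers 4^{3r} · ((p^l − 1)/2)! / (r! (2r)! ((p^l − 1)/2 − 3r)!) ≡ (−1)^{3r} · (6r)! / (r! (2r)! (3r)!) (mod p). -/
noncomputable section

open scoped NumberField

private lemma cast_ne_zero' {p : ℕ} [Fact p.Prime] {a : ℕ} (h1 : 0 < a) (h2 : a < p) :
    (a : ZMod p) ≠ 0 := by
  rw [Ne, ZMod.natCast_eq_zero_iff]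
  exact fun h => absurd (Nat.le_of_dvd h1 h) (not_le.mpr h2)

/-- Single-digit case: `4^t C((p-1)/2, t) = (-1)^t C(2t, t)` in `ZMod p`. -/
private lemma base_case {p : ℕ} [hp : Fact p.Prime] (hp2 : p % 2 = 1) :
    ∀ t : ℕ, 2 * t + 1 ≤ p →
      (4 : ZMod p) ^ t * ((p / 2).choose t) = (-1) ^ t * ((2 * t).choose t) := by
  set m := p / 2 with hm
  have hmp : 2 * m + 1 = p := by omega
  intro t
  induction t with
  | zero => simp
  | succ t IH =>
    intro ht
    have IH' := IH (by omega)
    have htm : t + 1 ≤ m := by omega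
    have h1 : t + 1 < p := by omega
    have f1 : m.choose (t + 1) * (t + 1) = m.choose t * (m - t) := Nat.choose_succ_right_eq m t
    have f2 : (2 * t + 1 + 1) * ((2 * t + 1).choose t) = (2 * t + 2).choose (t + 1) * (t + 1) :=
      Nat.add_one_mul_choose_eq (2 * t + 1) t
    have f3 : (2 * t + 1) * ((2 * t).choose t) = (2 * t + 1).choose t * (t + 1) := by
      have := Nat.add_one_mul_choose_eq (2 * t) t
      rwa [Nat.choose_symm_half t] at this
    have e1 : ((m.choose (t + 1) : ZMod p)) * (t + 1) = (m.choose t) * ((m : ZMod p) - t) := by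
      have := congrArg (Nat.cast : ℕ → ZMod p) f1
      push_cast [Nat.cast_sub (by omega : t ≤ m)] at this
      exact this
    have e2 : ((2 * (t : ZMod p) + 1 + 1)) * ((2 * t + 1).choose t : ZMod p)
        = ((2 * t + 2).choose (t + 1) : ZMod p) * (t + 1) := by
      have := congrArg (Nat.cast : ℕ → ZMod p) f2
      push_cast at this
      exact this
    have e3 : (2 * (t : ZMod p) + 1) * ((2 * t).choose t : ZMod p)
        = ((2 * t + 1).choose t : ZMod p) * (t + 1) := by
      have := congrArg (Nat.cast : ℕ → ZMod p) f3
      push_cast at this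
      exact this
    have c1 : (2 : ZMod p) * m = -1 := by
      have : ((2 * m + 1 : ℕ) : ZMod p) = ((p : ℕ) : ZMod p) := by rw [hmp]
      push_cast [ZMod.natCast_self] at this
      linear_combination this
    have htp1 : ((t : ZMod p) + 1) ≠ 0 := by
      have := cast_ne_zero' (p := p) (a := t + 1) (by omega) h1
      push_cast at this; exact this
    have goal2 : ((4 : ZMod p) ^ (t + 1) * ((m.choose (t + 1) : ℕ) : ZMod p))
          * (((t : ZMod p) + 1) * ((t : ZMod p) + 1))
        = ((-1) ^ (t + 1) * (((2 * (t + 1)).choose (t + 1) : ℕ) : ZMod p))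
          * (((t : ZMod p) + 1) * ((t : ZMod p) + 1)) := by
      have h2t : 2 * (t + 1) = 2 * t + 2 := by ring
      rw [h2t]
      linear_combination (4 ^ (t + 1) * ((t : ZMod p) + 1)) * e1
        + ((-1 : ZMod p) ^ (t + 1) * ((t : ZMod p) + 1)) * e2
        + ((-1 : ZMod p) ^ (t + 1) * (2 * (t : ZMod p) + 2)) * e3
        + (4 * ((t : ZMod p) + 1) * ((m : ZMod p) - t)) * IH'
        + (2 * ((t : ZMod p) + 1) * (-1 : ZMod p) ^ t * ((2 * t).choose t : ZMod p)) * c1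
    exact mul_right_cancel₀ (mul_ne_zero htp1 htp1) goal2

/-- Main congruence: `4^k C((p^l-1)/2, k) = (-1)^k C(2k, k)` in `ZMod p`, by induction on `l`
via Lucas' theorem. -/
private lemma key_lemma {p : ℕ} [hp : Fact p.Prime] (hp2 : p % 2 = 1) :
    ∀ l s k : ℕ, p ^ l = 2 * s + 1 → k ≤ s →
      (4 : ZMod p) ^ k * (s.choose k) = (-1) ^ k * ((2 * k).choose k) := by
  have base := base_case (p := p) hp2
  intro l
  induction l with
  | zero =>
    intro s k h hk
    rw [pow_zero] at h
    have hs : s = 0 := by omega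
    have hkk : k = 0 := by omega
    subst hs; subst hkk; simp
  | succ l IH =>
    intro s k h hk
    set m := p / 2 with hm
    have hmp : 2 * m + 1 = p := by omega
    set s₁ := p ^ l / 2 with hs₁
    have hpl : p ^ l = 2 * s₁ + 1 := by
      rcases Nat.even_or_odd (p ^ l) with he | ho
      · exfalso
        have h2 : (2 : ℕ) ∣ p ^ l := he.two_dvd
        have : (2 : ℕ) ∣ p ^ (l + 1) := by
          rw [pow_succ]; exact h2.mul_right p
        omega
      · obtain ⟨c, hc⟩ := ho; omega
    have hsplit : s = p * s₁ + m := by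
      have : p ^ (l + 1) = p ^ l * p := pow_succ p l
      rw [h, hpl] at this
      have : 2 * s + 1 = (2 * s₁ + 1) * (2 * m + 1) := by rw [this, hmp]
      have hx : (2 * s₁ + 1) * (2 * m + 1) = 2 * (2 * (s₁ * m) + s₁ + m) + 1 := by ring
      have hy : p * s₁ = 2 * (s₁ * m) + s₁ := by rw [← hmp]; ring
      omega
    set t := k % p with ht
    set q := k / p with hq
    have hk_eq : k = p * q + t := (Nat.div_add_mod k p).symm
    have htp : t < p := Nat.mod_lt _ hp.out.pos
    have hqs : q ≤ s₁ := by
      have h1 : k / p ≤ s / p := Nat.div_le_div_right hk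
      have h2 : s / p = s₁ := by
        rw [hsplit, Nat.mul_add_div hp.out.pos, Nat.div_eq_of_lt (by omega), add_zero]
      omega
    have L1 : ((s.choose k : ℕ) : ZMod p)
        = ((m.choose t : ℕ) : ZMod p) * ((s₁.choose q : ℕ) : ZMod p) := by
      have hmod : s % p = m := by rw [hsplit, Nat.mul_add_mod, Nat.mod_eq_of_lt (by omega)]
      have hdiv : s / p = s₁ := by
        rw [hsplit, Nat.mul_add_div hp.out.pos, Nat.div_eq_of_lt (by omega), add_zero]
      have := (ZMod.intCast_eq_intCast_iff _ _ _).mpr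
        (Choose.choose_modEq_choose_mod_mul_choose_div (n := s) (k := k) (p := p))
      rw [hmod, hdiv] at this
      push_cast at this
      exact this
    by_cases hcase : t ≤ m
    · have h2t : 2 * k = p * (2 * q) + 2 * t := by rw [hk_eq]; ring
      have hmod2 : (2 * k) % p = 2 * t := by
        rw [h2t, Nat.mul_add_mod, Nat.mod_eq_of_lt (by omega)]
      have hdiv2 : (2 * k) / p = 2 * q := by
        rw [h2t, Nat.mul_add_div hp.out.pos, Nat.div_eq_of_lt (by omega), add_zero]
      have L2 : (((2 * k).choose k : ℕ) : ZMod p)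
          = (((2 * t).choose t : ℕ) : ZMod p) * (((2 * q).choose q : ℕ) : ZMod p) := by
        have := (ZMod.intCast_eq_intCast_iff _ _ _).mpr
          (Choose.choose_modEq_choose_mod_mul_choose_div (n := 2 * k) (k := k) (p := p))
        rw [hmod2, hdiv2, ← ht, ← hq] at this
        push_cast at this
        exact this
      have h4 : (4 : ZMod p) ^ k = 4 ^ t * 4 ^ q := by
        conv_lhs => rw [hk_eq]
        rw [pow_add, pow_mul, ZMod.pow_card, mul_comm]
      have hneg : (-1 : ZMod p) ^ k = (-1) ^ t * (-1) ^ q := by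
        conv_lhs => rw [hk_eq]
        rw [pow_add, pow_mul, ZMod.pow_card, mul_comm]
      rw [L1, L2, h4, hneg]
      have b1 := base t (by omega)
      have b2 := IH s₁ q hpl hqs
      linear_combination (4 ^ q * ((s₁.choose q : ℕ) : ZMod p)) * b1
        + ((-1 : ZMod p) ^ t * (((2 * t).choose t : ℕ) : ZMod p)) * b2
    · have hmt : m < t := by omega
      have hcm : m.choose t = 0 := Nat.choose_eq_zero_of_lt hmt
      have haux : p * (2 * q + 1) = p * (2 * q) + p := by ring
      have h2t : 2 * k = p * (2 * q + 1) + (2 * t - p) := by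
        have h2t0 : 2 * k = p * (2 * q) + 2 * t := by rw [hk_eq]; ring
        omega
      have hmod2 : (2 * k) % p = 2 * t - p := by
        rw [h2t, Nat.mul_add_mod, Nat.mod_eq_of_lt (by omega)]
      have hdiv2 : (2 * k) / p = 2 * q + 1 := by
        rw [h2t, Nat.mul_add_div hp.out.pos, Nat.div_eq_of_lt (by omega), add_zero]
      have hcz : (2 * t - p).choose t = 0 := Nat.choose_eq_zero_of_lt (by omega)
      have L2 : (((2 * k).choose k : ℕ) : ZMod p) = 0 := by
        have := (ZMod.intCast_eq_intCast_iff _ _ _).mpr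
          (Choose.choose_modEq_choose_mod_mul_choose_div (n := 2 * k) (k := k) (p := p))
        rw [hmod2, hdiv2, ← ht, hcz] at this
        push_cast at this
        simpa using this
      rw [L1, L2, hcm]
      push_cast
      ring


/-- **Lemma 3.3.** Let `p ∤ 6` be a prime, `l ≥ 1`, and write `p^l = 2s + 1`. Then for every
`0 ≤ r ≤ (p^l - 1)/6` (i.e. `6r ≤ 2s`), with `A = s!/(r!(2r)!(s - 3r)!)` and
`B = (6r)!/(r!(2r)!(3r)!)` the corresponding multinomial coefficients, one has
`4^(3r)·A ≡ (-1)^(3r)·B (mod p)`. -/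
theorem statement5 (p : ℕ) (hp : p.Prime) (hp6 : ¬p ∣ 6) (l : ℕ) (hl : 0 < l)
    (s : ℕ) (hs : p ^ l = 2 * s + 1) (r : ℕ) (hr : 6 * r ≤ 2 * s)
    (A B : ℤ)
    (hA : A * ((r.factorial * (2 * r).factorial * (s - 3 * r).factorial : ℕ) : ℤ) =
      (s.factorial : ℤ))
    (hB : B * ((r.factorial * (2 * r).factorial * (3 * r).factorial : ℕ) : ℤ) =
      ((6 * r).factorial : ℤ)) :
    (4 : ℤ) ^ (3 * r) * A ≡ (-1) ^ (3 * r) * B [ZMOD p] := by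
  haveI : Fact p.Prime := ⟨hp⟩
  have hp2 : p % 2 = 1 := by
    have h2 : ¬ (2 ∣ p) := by
      intro h
      rcases hp.eq_one_or_self_of_dvd 2 h with h' | h'
      · omega
      · exact hp6 (h' ▸ (by norm_num : (2 : ℕ) ∣ 6))
    omega
  have h3r : 3 * r ≤ s := by omega
  have n1 : (3 * r).choose r * (r.factorial * (2 * r).factorial) = (3 * r).factorial := by
    have h32 : 3 * r - r = 2 * r := by omega
    have := Nat.choose_mul_factorial_mul_factorial (show r ≤ 3 * r by omega)
    rw [h32] at this
    rw [← mul_assoc]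
    exact this
  have n2 : s.choose (3 * r) * (3 * r).factorial * (s - 3 * r).factorial = s.factorial :=
    Nat.choose_mul_factorial_mul_factorial h3r
  have n3 : (6 * r).choose (3 * r) * (3 * r).factorial * (3 * r).factorial
      = (6 * r).factorial := by
    have h63 : 6 * r - 3 * r = 3 * r := by omega
    have := Nat.choose_mul_factorial_mul_factorial (show 3 * r ≤ 6 * r by omega)
    rwa [h63] at this
  have hA' : A = ((s.choose (3 * r) * (3 * r).choose r : ℕ) : ℤ) := by
    have hD : ((r.factorial * (2 * r).factorial * (s - 3 * r).factorial : ℕ) : ℤ) ≠ 0 := by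
      have : 0 < r.factorial * (2 * r).factorial * (s - 3 * r).factorial :=
        Nat.mul_pos (Nat.mul_pos (Nat.factorial_pos _) (Nat.factorial_pos _))
          (Nat.factorial_pos _)
      exact_mod_cast this.ne'
    have nA : (s.choose (3 * r) * (3 * r).choose r)
        * (r.factorial * (2 * r).factorial * (s - 3 * r).factorial) = s.factorial := by
      calc (s.choose (3 * r) * (3 * r).choose r)
            * (r.factorial * (2 * r).factorial * (s - 3 * r).factorial)
          = s.choose (3 * r) * ((3 * r).choose r * (r.factorial * (2 * r).factorial))
            * (s - 3 * r).factorial := by ring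
        _ = s.choose (3 * r) * (3 * r).factorial * (s - 3 * r).factorial := by rw [n1]
        _ = s.factorial := n2
    apply mul_right_cancel₀ hD
    rw [hA, ← nA]
    push_cast
    ring
  have hB' : B = (((6 * r).choose (3 * r) * (3 * r).choose r : ℕ) : ℤ) := by
    have hD : ((r.factorial * (2 * r).factorial * (3 * r).factorial : ℕ) : ℤ) ≠ 0 := by
      have : 0 < r.factorial * (2 * r).factorial * (3 * r).factorial :=
        Nat.mul_pos (Nat.mul_pos (Nat.factorial_pos _) (Nat.factorial_pos _))
          (Nat.factorial_pos _)
      exact_mod_cast this.ne'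
    have nB : ((6 * r).choose (3 * r) * (3 * r).choose r)
        * (r.factorial * (2 * r).factorial * (3 * r).factorial) = (6 * r).factorial := by
      calc ((6 * r).choose (3 * r) * (3 * r).choose r)
            * (r.factorial * (2 * r).factorial * (3 * r).factorial)
          = (6 * r).choose (3 * r) * ((3 * r).choose r * (r.factorial * (2 * r).factorial))
            * (3 * r).factorial := by ring
        _ = (6 * r).choose (3 * r) * (3 * r).factorial * (3 * r).factorial := by rw [n1]
        _ = (6 * r).factorial := n3
    apply mul_right_cancel₀ hD
    rw [hB, ← nB]
    push_cast
    ring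
  rw [hA', hB', ← ZMod.intCast_eq_intCast_iff]
  push_cast
  have hk := key_lemma hp2 l s (3 * r) hs h3r
  rw [show 2 * (3 * r) = 6 * r by ring] at hk
  linear_combination (((3 * r).choose r : ℕ) : ZMod p) * hk

end
end

section
/- Let p be a rational prime with p ∤ 6 and let l be a positive integer. Then for every integer r with (p^l − 1)/6 < r ≤ p^l − 1, the rational number (1/6)_r (5/6)_r / (r!)² = 432^{−r} · (6r)!/(r!(2r)!(3r)!) has p-adic valuation at least 1; equivalently, p divides the integer (6r)!/(r!(2r)!(3r)!). -/
noncomputable section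

open scoped NumberField

lemma poch_id (r : ℕ) :
    poch (1/6) r * poch (5/6) r * 432 ^ r *
      ((r.factorial * (2*r).factorial * (3*r).factorial : ℕ) : ℚ)
      = ((6*r).factorial : ℚ) * (r.factorial : ℚ) ^ 2 := by
  induction r with
  | zero => simp [poch]
  | succ r ih =>
    have h2 : 2 * (r+1) = (2*r + 1) + 1 := by ring
    have h3 : 3 * (r+1) = ((3*r + 1) + 1) + 1 := by ring
    have h6 : 6 * (r+1) = (((((6*r+1)+1)+1)+1)+1)+1 := by ring
    rw [poch, poch, Finset.prod_range_succ, Finset.prod_range_succ, ← poch, ← poch,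
      h2, h3, h6]
    simp only [Nat.factorial_succ]
    push_cast
    push_cast at ih
    linear_combination (432*(1/6+(r:ℚ))*(5/6+(r:ℚ))*((r:ℚ)+1)*(2*(r:ℚ)+1)*(2*(r:ℚ)+2)*(3*(r:ℚ)+1)*(3*(r:ℚ)+2)*(3*(r:ℚ)+3)) * ih

/-- **Lemma 4.1.** Let `p ∤ 6` be a prime and `l ≥ 1`. For `(p^l - 1)/6 < r ≤ p^l - 1`, the
rational number `(1/6)_r (5/6)_r / (r!)²` has `p`-adic valuation at least `1`; equivalently,
`p` divides the multinomial coefficient `C = (6r)!/(r!(2r)!(3r)!)`. -/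
theorem statement7 (p : ℕ) (hp : p.Prime) (hp6 : ¬p ∣ 6) (l : ℕ) (hl : 0 < l)
    (r : ℕ) (hr1 : p ^ l - 1 < 6 * r) (hr2 : r ≤ p ^ l - 1)
    (C : ℤ)
    (hC : C * ((r.factorial * (2 * r).factorial * (3 * r).factorial : ℕ) : ℤ) =
      ((6 * r).factorial : ℤ)) :
    1 ≤ padicValRat p (poch (1/6) r * poch (5/6) r / (r.factorial : ℚ) ^ 2) ∧
      (p : ℤ) ∣ C := by
  haveI := Fact.mk hp
  set n := p ^ l with hn_def
  have hn2 : 2 ≤ n := le_trans hp.two_le (Nat.le_self_pow (by omega) p)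
  have hn : 0 < n := by omega
  have hple : n ≤ 6 * r := by omega
  have hrn : r < n := by omega
  have hr0 : 0 < r := by omega
  set M := r.factorial * (2 * r).factorial * (3 * r).factorial with hM_def
  set N := (6 * r).factorial with hN_def
  have hM0 : M ≠ 0 := by positivity
  have hN0 : N ≠ 0 := Nat.factorial_ne_zero _
  -- M ∣ N
  have d1 : r.factorial * (2*r).factorial ∣ (3*r).factorial := by
    have h := Nat.factorial_mul_factorial_dvd_factorial_add r (2*r)
    rwa [show r + 2*r = 3*r by ring] at h
  have d2 : (3*r).factorial * (3*r).factorial ∣ (6*r).factorial := by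
    have h := Nat.factorial_mul_factorial_dvd_factorial_add (3*r) (3*r)
    rwa [show 3*r + 3*r = 6*r by ring] at h
  have hMN : M ∣ N := dvd_trans (mul_dvd_mul_right d1 _) d2
  set D := N / M with hD_def
  have hND : N = M * D := (Nat.mul_div_cancel' hMN).symm
  have hD0 : D ≠ 0 := by
    intro h; rw [h, mul_zero] at hND; exact hN0 hND
  -- Legendre bound
  set b := Nat.log p (6 * r) + 1 with hb_def
  have hlb : l < b := by
    have : l ≤ Nat.log p (6 * r) :=
      (Nat.le_log_iff_pow_le hp.one_lt (by omega)).mpr hple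
    omega
  have hlog : ∀ m : ℕ, m ≤ 6 * r → Nat.log p m < b := fun m hm =>
    lt_of_le_of_lt (Nat.log_mono_right hm) (by omega)
  have legendre : ∀ m : ℕ, Nat.log p m < b →
      padicValNat p m.factorial = ∑ i ∈ Finset.Ico 1 b, m / p ^ i := fun m hm =>
    padicValNat_factorial hm
  have termwise : ∀ i : ℕ, r / p ^ i + 2 * r / p ^ i + 3 * r / p ^ i ≤ 6 * r / p ^ i := by
    intro i
    have hpi : 0 < p ^ i := pow_pos hp.pos i
    rw [Nat.le_div_iff_mul_le hpi]
    have a1 := Nat.div_mul_le_self r (p ^ i)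
    have a2 := Nat.div_mul_le_self (2 * r) (p ^ i)
    have a3 := Nat.div_mul_le_self (3 * r) (p ^ i)
    calc (r / p ^ i + 2 * r / p ^ i + 3 * r / p ^ i) * p ^ i
        = r / p ^ i * p ^ i + 2 * r / p ^ i * p ^ i + 3 * r / p ^ i * p ^ i := by ring
      _ ≤ r + 2 * r + 3 * r := by omega
      _ = 6 * r := by ring
  have key : r / n + 2 * r / n + 3 * r / n < 6 * r / n := by
    have h1 : r / n = 0 := Nat.div_eq_of_lt hrn
    have e2 := Nat.div_add_mod (2 * r) n
    have e3 := Nat.div_add_mod (3 * r) n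
    have e6 := Nat.div_add_mod (6 * r) n
    have m2 := Nat.mod_lt (2 * r) hn
    have m3 := Nat.mod_lt (3 * r) hn
    have m6 := Nat.mod_lt (6 * r) hn
    have ha : 2 * r / n < 2 := Nat.div_lt_of_lt_mul (by omega)
    have hb' : 3 * r / n < 3 := Nat.div_lt_of_lt_mul (by omega)
    have hc : 6 * r / n < 6 := Nat.div_lt_of_lt_mul (by omega)
    set a := 2 * r / n
    set b' := 3 * r / n
    set c := 6 * r / n
    interval_cases a <;> interval_cases b' <;> interval_cases c <;> omega
  have hsum : (∑ i ∈ Finset.Ico 1 b, (r / p ^ i + 2 * r / p ^ i + 3 * r / p ^ i)) <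
      ∑ i ∈ Finset.Ico 1 b, 6 * r / p ^ i := by
    apply Finset.sum_lt_sum (fun i _ => termwise i)
    exact ⟨l, Finset.mem_Ico.mpr ⟨hl, hlb⟩, key⟩
  have hval : padicValNat p M + 1 ≤ padicValNat p N := by
    have hM : padicValNat p M = padicValNat p r.factorial
        + padicValNat p (2 * r).factorial + padicValNat p (3 * r).factorial := by
      rw [hM_def, padicValNat.mul (by positivity) (Nat.factorial_ne_zero _),
        padicValNat.mul (Nat.factorial_ne_zero _) (Nat.factorial_ne_zero _)]
    rw [hM, hN_def, legendre r (hlog r (by omega)), legendre (2*r) (hlog _ (by omega)),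
      legendre (3*r) (hlog _ (by omega)), legendre (6*r) (hlog _ le_rfl)]
    rw [← Finset.sum_add_distrib, ← Finset.sum_add_distrib]
    omega
  have hDval : 1 ≤ padicValNat p D := by
    have : padicValNat p N = padicValNat p M + padicValNat p D := by
      rw [hND]; exact padicValNat.mul hM0 hD0
    omega
  have hpD : p ∣ D := dvd_of_one_le_padicValNat hDval
  -- C = D
  have hCD : C = (D : ℤ) := by
    have hND' : (N : ℤ) = (M : ℤ) * (D : ℤ) := by exact_mod_cast hND
    have h := hC
    rw [hND'] at h
    have hM0' : (M : ℤ) ≠ 0 := by exact_mod_cast hM0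
    have : C * (M : ℤ) = (D : ℤ) * (M : ℤ) := by linarith [h]
    exact mul_right_cancel₀ hM0' this
  refine ⟨?_, by rw [hCD]; exact_mod_cast Int.natCast_dvd_natCast.mpr hpD⟩
  -- the valuation statement
  have hv : poch (1/6) r * poch (5/6) r / (r.factorial : ℚ) ^ 2 = (D : ℚ) / 432 ^ r := by
    have hid := poch_id r
    have hMQ : ((M : ℕ) : ℚ) ≠ 0 := by exact_mod_cast hM0
    have hfQ : ((r.factorial : ℚ)) ≠ 0 := by exact_mod_cast Nat.factorial_ne_zero r
    have h432 : ((432 : ℚ)) ^ r ≠ 0 := by positivity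
    rw [div_eq_div_iff (by positivity) h432]
    apply mul_right_cancel₀ hMQ
    have hND' : ((N : ℕ) : ℚ) = (M : ℚ) * (D : ℚ) := by exact_mod_cast congrArg (Nat.cast : ℕ → ℚ) hND
    calc poch (1/6) r * poch (5/6) r * 432 ^ r * (M : ℚ)
        = ((6*r).factorial : ℚ) * (r.factorial : ℚ) ^ 2 := hid
      _ = (M : ℚ) * (D : ℚ) * (r.factorial : ℚ) ^ 2 := by rw [← hND']
      _ = (D : ℚ) * (r.factorial : ℚ) ^ 2 * (M : ℚ) := by ring
  rw [hv]
  have hDQ : ((D : ℕ) : ℚ) ≠ 0 := by exact_mod_cast hD0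
  have h432Q : ((432 : ℚ)) ^ r ≠ 0 := by positivity
  rw [padicValRat.div hDQ h432Q]
  have hv432 : padicValRat p ((432 : ℚ) ^ r) = 0 := by
    have hnd : ¬ p ∣ 432 := by
      intro h
      exact hp6 (hp.dvd_of_dvd_pow (h.trans ⟨3, by norm_num⟩ : p ∣ 6 ^ 4))
    have : ((432 : ℚ) ^ r) = (((432 ^ r : ℕ)) : ℚ) := by push_cast; ring
    rw [this, padicValRat.of_nat, padicValNat.pow 432 r,
      padicValNat.eq_zero_of_not_dvd hnd]
    simp
  rw [hv432, padicValRat.of_nat]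
  have : 1 ≤ (padicValNat p D : ℤ) := by exact_mod_cast hDval
  omega

end
end

section
/- Let p be a rational prime with p ∤ 6 and let l be a positive integer. Then for every integer r with (p^l − 1)/6 < r ≤ p^l − 1, the rational number (1/2)_r (1/6)_r (5/6)_r / (r!)³ = 1728^{−r} · (6r)!/((3r)!(r!)³) has p-adic valuation at least 1; equivalently, p divides the integer (6r)!/((3r)!(r!)³). -/
noncomputable section

open scoped NumberField

lemma poch_succ (a : ℚ) (n : ℕ) : poch a (n+1) = poch a n * (a + n) :=
  Finset.prod_range_succ _ _

lemma key_id (r : ℕ) :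
    poch (1/2) r * poch (1/6) r * poch (5/6) r * 1728 ^ r * ((3*r).factorial : ℚ)
      = ((6*r).factorial : ℚ) := by
  induction r with
  | zero => simp [poch]
  | succ n ih =>
    have h3 : 3 * (n+1) = 3*n + 1 + 1 + 1 := by ring
    have h6 : 6 * (n+1) = 6*n + 1 + 1 + 1 + 1 + 1 + 1 := by ring
    rw [poch_succ, poch_succ, poch_succ, h3, h6]
    simp only [Nat.factorial_succ]
    push_cast
    linear_combination (((1:ℚ)/2+n)*(1/6+n)*(5/6+n)*1728*((3*n+1)*(3*n+2)*(3*n+3))) * ih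

lemma div_add_div_le (a b c : ℕ) : a / c + b / c ≤ (a + b) / c := by
  rcases Nat.eq_zero_or_pos c with h | h
  · simp [h]
  · rw [Nat.le_div_iff_mul_le h, Nat.add_mul]
    exact Nat.add_le_add (Nat.div_mul_le_self a c) (Nat.div_mul_le_self b c)

lemma legendre (p : ℕ) (hp : p.Prime) (l r : ℕ) (hl : 0 < l)
    (h1 : p ^ l ≤ 6 * r) (h2 : r < p ^ l) :
    padicValNat p ((3*r).factorial) + 3 * padicValNat p (r.factorial) + 1
      ≤ padicValNat p ((6*r).factorial) := by
  haveI : Fact p.Prime := ⟨hp⟩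
  have hb : ∀ n : ℕ, n ≤ 6 * r → Nat.log p n < 6 * r + 1 := fun n hn =>
    lt_of_le_of_lt (le_trans (Nat.log_le_self p n) hn) (Nat.lt_succ_self _)
  have hr0 : 0 < r := by
    rcases Nat.eq_zero_or_pos r with h | h
    · exfalso; rw [h, Nat.mul_zero] at h1
      exact absurd h1 (Nat.not_le.2 (pow_pos hp.pos l))
    · exact h
  rw [padicValNat_factorial (hb _ (by omega)), padicValNat_factorial (hb _ (by omega)),
    padicValNat_factorial (hb _ (by omega)), Finset.mul_sum, ← Finset.sum_add_distrib]
  have hlmem : l ∈ Finset.Ico 1 (6*r+1) := by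
    refine Finset.mem_Ico.2 ⟨hl, ?_⟩
    have hpl : l < p ^ l := Nat.lt_pow_self hp.two_le
    omega
  calc ∑ i ∈ Finset.Ico 1 (6*r+1), (3*r / p ^ i + 3 * (r / p ^ i)) + 1
      = ∑ i ∈ Finset.Ico 1 (6*r+1),
          (3*r / p ^ i + 3 * (r / p ^ i) + if i = l then 1 else 0) := by
        rw [Finset.sum_add_distrib, Finset.sum_add_distrib, Finset.sum_ite_eq' _ l,
          if_pos hlmem, Finset.sum_add_distrib]
    _ ≤ ∑ i ∈ Finset.Ico 1 (6*r+1), 6*r / p ^ i := by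
        apply Finset.sum_le_sum
        intro i _
        by_cases hi : i = l
        · subst hi
          simp only [if_pos rfl]
          rw [Nat.div_eq_of_lt h2, Nat.mul_zero, Nat.add_zero]
          set k := 3*r / p ^ i with hk
          have hk1 : k * p ^ i ≤ 3 * r := Nat.div_mul_le_self _ _
          rw [Nat.le_div_iff_mul_le (pow_pos hp.pos i)]
          rcases Nat.eq_zero_or_pos k with h | h
          · rw [h]; simpa using h1
          · calc (k + 1) * p ^ i ≤ (2 * k) * p ^ i :=
                  Nat.mul_le_mul_right _ (by omega)
              _ = 2 * (k * p ^ i) := by ring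
              _ ≤ 2 * (3 * r) := by omega
              _ = 6 * r := by ring
        · simp only [if_neg hi, Nat.add_zero]
          calc 3*r / p ^ i + 3 * (r / p ^ i) ≤ 3*r / p ^ i + 3*r / p ^ i :=
                Nat.add_le_add_left (Nat.mul_div_le_mul_div_assoc _ _ _) _
            _ ≤ (3*r + 3*r) / p ^ i := div_add_div_le _ _ _
            _ = 6*r / p ^ i := by ring_nf

/-- **Lemma 4.2.** Let `p ∤ 6` be a prime and `l ≥ 1`. For `(p^l - 1)/6 < r ≤ p^l - 1`, the
rational number `(1/2)_r (1/6)_r (5/6)_r / (r!)³` has `p`-adic valuation at least `1`;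
equivalently, `p` divides the multinomial coefficient `C = (6r)!/((3r)!(r!)³)`. -/
theorem statement8 (p : ℕ) (hp : p.Prime) (hp6 : ¬p ∣ 6) (l : ℕ) (hl : 0 < l)
    (r : ℕ) (hr1 : p ^ l - 1 < 6 * r) (hr2 : r ≤ p ^ l - 1)
    (C : ℤ)
    (hC : C * (((3 * r).factorial * r.factorial ^ 3 : ℕ) : ℤ) = ((6 * r).factorial : ℤ)) :
    1 ≤ padicValRat p (poch (1/2) r * poch (1/6) r * poch (5/6) r / (r.factorial : ℚ) ^ 3) ∧
      (p : ℤ) ∣ C := by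
  haveI : Fact p.Prime := ⟨hp⟩
  have hppos : 0 < p ^ l := pow_pos hp.pos l
  have h1 : p ^ l ≤ 6 * r := by omega
  have h2 : r < p ^ l := by omega
  -- C is positive
  have hNpos : (0:ℤ) < (((3 * r).factorial * r.factorial ^ 3 : ℕ) : ℤ) := by
    exact_mod_cast Nat.mul_pos (Nat.factorial_pos _) (pow_pos (Nat.factorial_pos _) 3)
  have hMpos : (0:ℤ) < ((6 * r).factorial : ℤ) := by exact_mod_cast Nat.factorial_pos _
  have hCpos : 0 < C := by nlinarith
  have hCnat : C.natAbs * ((3 * r).factorial * r.factorial ^ 3) = (6 * r).factorial := by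
    have : (C.natAbs : ℤ) = C := Int.natAbs_of_nonneg hCpos.le
    exact_mod_cast this ▸ hC
  -- p divides C
  have hCne : C.natAbs ≠ 0 := by positivity
  have hval : padicValNat p ((6*r).factorial)
      = padicValNat p C.natAbs + (padicValNat p ((3*r).factorial)
        + 3 * padicValNat p (r.factorial)) := by
    rw [← hCnat, padicValNat.mul hCne (by positivity), padicValNat.mul (by positivity)
      (by positivity), padicValNat.pow _ 3]
  have hleg := legendre p hp l r hl h1 h2
  have hone : 1 ≤ padicValNat p C.natAbs := by omega
  have hdvdn : p ∣ C.natAbs := by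
    by_contra h
    rw [padicValNat.eq_zero_of_not_dvd h] at hone
    omega
  have hdvd : (p : ℤ) ∣ C := Int.dvd_natAbs.mp (Int.natCast_dvd_natCast.2 hdvdn)
  refine ⟨?_, hdvd⟩
  -- rewrite the rational expression as C / 1728^r
  have hCq : (C:ℚ) * (((3*r).factorial : ℚ) * (r.factorial:ℚ)^3) = ((6*r).factorial : ℚ) := by
    exact_mod_cast hC
  have h3fac : ((3*r).factorial : ℚ) ≠ 0 := Nat.cast_ne_zero.2 (Nat.factorial_ne_zero _)
  have hrfac : ((r.factorial : ℚ)) ≠ 0 := Nat.cast_ne_zero.2 (Nat.factorial_ne_zero _)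
  have h1728 : ((1728:ℚ)) ^ r ≠ 0 := pow_ne_zero _ (by norm_num)
  have key2 : (poch (1/2) r * poch (1/6) r * poch (5/6) r * 1728 ^ r) * ((3*r).factorial : ℚ)
      = ((C:ℚ) * (r.factorial:ℚ)^3) * ((3*r).factorial : ℚ) := by
    linear_combination key_id r - hCq
  have key3 := mul_right_cancel₀ h3fac key2
  have hq : poch (1/2) r * poch (1/6) r * poch (5/6) r / (r.factorial : ℚ) ^ 3
      = (C:ℚ) / 1728 ^ r := by
    rw [div_eq_div_iff (pow_ne_zero 3 hrfac) h1728]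
    linear_combination key3
  rw [hq, padicValRat.div (by exact_mod_cast hCpos.ne') h1728]
  have hv1728 : padicValRat p ((1728:ℚ) ^ r) = 0 := by
    rw [padicValRat.pow _]
    have : ((1728:ℚ)) = ((1728:ℤ):ℚ) := by norm_num
    rw [this, padicValRat.of_int]
    have : padicValInt p 1728 = 0 := by
      apply padicValInt.eq_zero_of_not_dvd
      intro hdvd
      have : (p:ℤ) ∣ 2^6 * 3^3 := by norm_num at hdvd ⊢; exact_mod_cast hdvd
      have hp' : Prime (p:ℤ) := Nat.prime_iff_prime_int.mp hp
      rcases hp'.dvd_mul.mp this with h | h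
      · have h2 : (p:ℤ) ∣ 2 := hp'.dvd_of_dvd_pow h
        have h2' : p ∣ 2 := by exact_mod_cast h2
        exact hp6 (dvd_trans h2' (by norm_num))
      · have h3 : (p:ℤ) ∣ 3 := hp'.dvd_of_dvd_pow h
        have h3' : p ∣ 3 := by exact_mod_cast h3
        exact hp6 (dvd_trans h3' (by norm_num))
    simp [this]
  rw [hv1728, sub_zero]
  have : padicValRat p (C:ℚ) = padicValInt p C := padicValRat.of_int
  rw [this]
  have : padicValInt p C = padicValNat p C.natAbs := rfl
  omega


end
end

section
/- Let p be a rational prime and l a positive integer. Let a be a p-adic integer with v_p(a) = 0. Let [a]₀ (resp. [−a]₀) denote the unique integer with 0 ≤ [a]₀ < p^l and a ≡ [a]₀ (mod p^l) (resp. 0 ≤ [−a]₀ < p^l and −a ≡ [−a]₀ (mod p^l)), and set a′ := (a + [−a]₀)/p^l ∈ ℤ_p. Then for every integer m with 0 ≤ m ≤ p^l − 1, the p-adic integers (a)_{mp^l}/(mp^l)! and (a′)_m/m! satisfy (a)_{mp^l}/(mp^l)! ≡ (a′)_m/m! (mod p). -/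
noncomputable section

open scoped NumberField

/-- ring product lemma -/
lemma myProdSub {R : Type*} [CommRing R] (b n : ℕ) (h : n ≤ b) :
    ∏ i ∈ Finset.range n, ((i : R) - b) = (-1) ^ n * (b.descFactorial n : R) := by
  have h1 : (b.descFactorial n : R) = ∏ i ∈ Finset.range n, ((b : R) - i) := by
    rw [Nat.descFactorial_eq_prod_range, Nat.cast_prod]
    refine Finset.prod_congr rfl fun i hi => ?_
    exact Nat.cast_sub ((Finset.mem_range.mp hi).le.trans h)
  rw [h1]
  calc ∏ i ∈ Finset.range n, ((i : R) - b)
      = ∏ i ∈ Finset.range n, (-1) * ((b : R) - i) := by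
        refine Finset.prod_congr rfl fun i _ => by ring
    _ = (-1) ^ n * ∏ i ∈ Finset.range n, ((b : R) - i) := by
        rw [Finset.prod_mul_distrib, Finset.prod_const, Finset.card_range]

/-- Lucas for prime powers, one-digit-zero form. -/
lemma myLucas (p : ℕ) [Fact p.Prime] :
    ∀ (l A b' m : ℕ), A < p ^ l →
      (((A + p ^ l * b').choose (m * p ^ l) : ZMod p)) = ((b'.choose m : ZMod p))
  | 0, A, b', m, hA => by
      have hA0 : A = 0 := by simpa using hA
      subst hA0
      simp
  | l + 1, A, b', m, hA => by
      have hp : 0 < p := (Fact.out : p.Prime).pos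
      have h := Choose.choose_modEq_choose_mod_mul_choose_div_nat (p := p)
        (n := A + p ^ (l + 1) * b') (k := m * p ^ (l + 1))
      have h2 := (ZMod.natCast_eq_natCast_iff _ _ _).mpr h
      rw [h2]
      have e1 : (A + p ^ (l + 1) * b') % p = A % p := by
        rw [pow_succ, mul_comm (p ^ l) p, mul_assoc, Nat.add_mul_mod_self_left]
      have e2 : (A + p ^ (l + 1) * b') / p = A / p + p ^ l * b' := by
        rw [pow_succ, mul_comm (p ^ l) p, mul_assoc, Nat.add_mul_div_left _ _ hp]
      have e3 : (m * p ^ (l + 1)) % p = 0 := by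
        rw [pow_succ, ← mul_assoc, Nat.mul_mod_left]
      have e4 : (m * p ^ (l + 1)) / p = m * p ^ l := by
        rw [pow_succ, ← mul_assoc, Nat.mul_div_cancel _ hp]
      rw [e1, e2, e3, e4, Nat.choose_zero_right, one_mul]
      have hA' : A / p < p ^ l := by
        rw [Nat.div_lt_iff_lt_mul hp]
        rwa [← pow_succ]
      exact myLucas p l (A / p) b' m hA'

lemma myKey (p : ℕ) [Fact p.Prime] (x : ℤ_[p]) (B k K : ℕ) (hk : k ≤ B)
    (hK : padicValNat p k.factorial < K)
    (hx : (p : ℤ_[p]) ^ K ∣ (x + B)) (c : ℤ_[p])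
    (hc : c * (k.factorial : ℤ_[p]) = ∏ i ∈ Finset.range k, (x + i)) :
    (p : ℤ_[p]) ∣ c - (-1) ^ k * (B.choose k : ℤ_[p]) := by
  set g : ℤ_[p] := c - (-1) ^ k * (B.choose k : ℤ_[p]) with hg
  have hxB : PadicInt.toZModPow K x = -(B : ZMod (p ^ K)) := by
    have h0 : PadicInt.toZModPow K (x + (B : ℤ_[p])) = 0 := by
      obtain ⟨t, ht⟩ := hx
      rw [ht, map_mul, map_pow, map_natCast, ← Nat.cast_pow, ZMod.natCast_self, zero_mul]
    rw [map_add, map_natCast, add_eq_zero_iff_eq_neg] at h0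
    exact h0
  have hker : (p : ℤ_[p]) ^ K ∣ g * (k.factorial : ℤ_[p]) := by
    have hmem : g * (k.factorial : ℤ_[p]) ∈ RingHom.ker (PadicInt.toZModPow (p := p) K) := by
      rw [RingHom.mem_ker, hg, sub_mul, hc, map_sub, map_prod]
      have h1 : ∏ i ∈ Finset.range k, PadicInt.toZModPow K (x + (i : ℤ_[p]))
          = (-1) ^ k * (B.descFactorial k : ZMod (p ^ K)) := by
        rw [← myProdSub B k hk]
        refine Finset.prod_congr rfl fun i _ => ?_
        rw [map_add, map_natCast, hxB]
        ring
      have h2 : PadicInt.toZModPow K ((-1) ^ k * (B.choose k : ℤ_[p]) * (k.factorial : ℤ_[p]))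
          = (-1) ^ k * (B.descFactorial k : ZMod (p ^ K)) := by
        rw [map_mul, map_mul, map_pow, map_neg, map_one, map_natCast, map_natCast,
          Nat.descFactorial_eq_factorial_mul_choose, Nat.cast_mul]
        ring
      rw [h1, h2, sub_self]
    rwa [PadicInt.ker_toZModPow, Ideal.mem_span_singleton] at hmem
  by_contra hnd
  have hfact := (PadicInt.prime_p (p := p)).pow_dvd_of_dvd_mul_left K hnd hker
  have hsucc : (p : ℤ_[p]) ^ (padicValNat p k.factorial + 1) ∣ (k.factorial : ℤ_[p]) :=
    dvd_trans (pow_dvd_pow _ hK) hfact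
  have hint : ((p : ℤ) ^ (padicValNat p k.factorial + 1)) ∣ (k.factorial : ℤ) := by
    rw [← PadicInt.pow_p_dvd_int_iff]
    exact_mod_cast hsucc
  have hnat : p ^ (padicValNat p k.factorial + 1) ∣ k.factorial := by exact_mod_cast hint
  exact pow_succ_padicValNat_not_dvd k.factorial_pos.ne' hnat

/-- **Lemma 5.1.** Let `p` be a prime, `l ≥ 1`, and `a ∈ ℤ_p` with `v_p(a) = 0`. Let `[-a]₀`
be the unique integer `A` with `0 ≤ A < p^l` and `-a ≡ A (mod p^l)`, and set
`a' = (a + A)/p^l ∈ ℤ_p`. Then for all `0 ≤ m ≤ p^l - 1`,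
`(a)_{m p^l}/(m p^l)! ≡ (a')_m/m! (mod p)`. -/
theorem statement10 (p : ℕ) [Fact p.Prime] (l : ℕ) (hl : 0 < l)
    (a : ℤ_[p]) (ha : ¬(p : ℤ_[p]) ∣ a)
    (A : ℕ) (hA : A < p ^ l) (a' : ℤ_[p]) (ha' : a' * (p : ℤ_[p]) ^ l = a + (A : ℤ_[p]))
    (m : ℕ) (hm : m ≤ p ^ l - 1)
    (c d : ℤ_[p])
    (hc : c * ((m * p ^ l).factorial : ℤ_[p]) =
      ∏ i ∈ Finset.range (m * p ^ l), (a + (i : ℤ_[p])))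
    (hd : d * (m.factorial : ℤ_[p]) = ∏ i ∈ Finset.range m, (a' + (i : ℤ_[p]))) :
    (p : ℤ_[p]) ∣ c - d := by
  have hp : p.Prime := Fact.out
  have hp1 : 1 < p := hp.one_lt
  set n := m * p ^ l with hn
  set vn := padicValNat p n.factorial with hvn
  set vm := padicValNat p m.factorial with hvm
  set N := vn + vm + 3 * l + 1 with hN
  set M := vn + vm + 2 * l + 1 with hM
  have hNM : N = M + l := by omega
  set b := PadicInt.appr (-a) N + p ^ N with hb
  have hab : (p : ℤ_[p]) ^ N ∣ (a + (b : ℤ_[p])) := by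
    have h1 := PadicInt.appr_spec N (-a)
    rw [Ideal.mem_span_singleton] at h1
    have h2 : a + (b : ℤ_[p]) = -(-a - (PadicInt.appr (-a) N : ℤ_[p])) + (p : ℤ_[p]) ^ N := by
      rw [hb]; push_cast; ring
    rw [h2]
    exact dvd_add (dvd_neg.mpr h1) dvd_rfl
  have hpl : 0 < p ^ l := pow_pos hp.pos l
  have hmlt : m < p ^ l := by omega
  have hnb : n ≤ b := by
    have h1 : n < p ^ (2 * l) := by
      rw [two_mul, pow_add, hn]
      exact Nat.mul_lt_mul_of_lt_of_le hmlt le_rfl hpl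
    have h2 : p ^ (2 * l) ≤ p ^ N := Nat.pow_le_pow_right hp.pos (by omega)
    have h3 : p ^ N ≤ b := Nat.le_add_left _ _
    omega
  have hpne : (p : ℤ_[p]) ≠ 0 := (PadicInt.prime_p (p := p)).ne_zero
  have hAeq : b % p ^ l = A := by
    have h1 : (p : ℤ_[p]) ^ l ∣ (a + (A : ℤ_[p])) := ⟨a', by rw [← ha']; ring⟩
    have h2 : (p : ℤ_[p]) ^ l ∣ (a + (b : ℤ_[p])) :=
      dvd_trans (pow_dvd_pow _ (by omega : l ≤ N)) hab
    have h3 : (p : ℤ_[p]) ^ l ∣ ((b : ℤ_[p]) - (A : ℤ_[p])) := by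
      have := dvd_sub h2 h1
      simpa using this
    have h4 : ((b : ZMod (p ^ l))) = (A : ZMod (p ^ l)) := by
      have h5 : PadicInt.toZModPow l ((b : ℤ_[p]) - (A : ℤ_[p])) = 0 := by
        obtain ⟨t, ht⟩ := h3
        rw [ht, map_mul, map_pow, map_natCast, ← Nat.cast_pow, ZMod.natCast_self, zero_mul]
      rw [map_sub, map_natCast, map_natCast, sub_eq_zero] at h5
      exact h5
    have h6 : b ≡ A [MOD p ^ l] := (ZMod.natCast_eq_natCast_iff _ _ _).mp h4
    rw [Nat.ModEq] at h6
    rw [h6, Nat.mod_eq_of_lt hA]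
  set b' := b / p ^ l with hb'
  have hbd : b = A + p ^ l * b' := by
    have h := Nat.div_add_mod b (p ^ l)
    rw [← hb', hAeq] at h
    omega
  have hmb' : m ≤ b' := by
    have h1 : p ^ M ≤ b' := by
      rw [hb', Nat.le_div_iff_mul_le hpl, ← pow_add, ← hNM]
      exact Nat.le_add_left _ _
    have h2 : p ^ l ≤ p ^ M := Nat.pow_le_pow_right hp.pos (by omega)
    omega
  have ha'b : (p : ℤ_[p]) ^ M ∣ (a' + (b' : ℤ_[p])) := by
    have key : (p : ℤ_[p]) ^ l * (a' + (b' : ℤ_[p])) = a + (b : ℤ_[p]) := by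
      have hcast : ((b : ℕ) : ℤ_[p]) = (A : ℤ_[p]) + (p : ℤ_[p]) ^ l * (b' : ℤ_[p]) := by
        rw [hbd]; push_cast; ring
      rw [hcast]; linear_combination ha'
    obtain ⟨t, ht⟩ := hab
    refine ⟨t, ?_⟩
    apply mul_left_cancel₀ (pow_ne_zero l hpne)
    rw [key, ht, hNM, pow_add]
    ring
  have hc' := myKey p a b n N hnb (by omega) hab c hc
  have hd' := myKey p a' b' m M hmb' (by omega) ha'b d hd
  have hEE : (p : ℤ_[p]) ∣
      ((-1) ^ n * (b.choose n : ℤ_[p]) - (-1) ^ m * (b'.choose m : ℤ_[p])) := by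
    have hz : (p : ℤ) ∣ ((-1) ^ n * (b.choose n : ℤ) - (-1) ^ m * (b'.choose m : ℤ)) := by
      rw [← ZMod.intCast_zmod_eq_zero_iff_dvd]
      push_cast
      have hluc : ((b.choose n : ZMod p)) = (b'.choose m : ZMod p) := by
        rw [hbd, hn]
        exact myLucas p l A b' m hA
      rw [hluc]
      have hsign : ((-1 : ZMod p)) ^ n = (-1 : ZMod p) ^ m := by
        by_cases hp2 : p = 2
        · subst hp2
          have : (-1 : ZMod 2) = 1 := rfl
          rw [this, one_pow, one_pow]
        · have hpodd : Odd p := hp.odd_of_ne_two hp2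
          rcases Nat.even_or_odd m with hme | hmo
          · rw [(hme.mul_right (p ^ l)).neg_one_pow, hme.neg_one_pow]
          · rw [(hmo.mul (hpodd.pow)).neg_one_pow, hmo.neg_one_pow]
      rw [hsign]
      ring
    obtain ⟨t, ht⟩ := hz
    refine ⟨(t : ℤ_[p]), ?_⟩
    have h7 := congrArg (fun z : ℤ => (z : ℤ_[p])) ht
    push_cast at h7
    linear_combination h7
  have heq : c - d = (c - (-1) ^ n * (b.choose n : ℤ_[p]))
      - (d - (-1) ^ m * (b'.choose m : ℤ_[p]))
      + ((-1) ^ n * (b.choose n : ℤ_[p]) - (-1) ^ m * (b'.choose m : ℤ_[p])) := by ring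
  rw [heq]
  exact dvd_add (dvd_sub hc' hd') hEE


end
end

section
/- Let p be a rational prime with p ∤ 6 and let l be a positive integer; set M := ⌊(p^l − 1)/6⌋. Then in 𝔽_p[t] one has Σ_{m=0}^{M} (1/6)_m (5/6)_m / (m!)² · t^m = (−1)^{(p^l−1)/2} · Σ_{m=0}^{M} (1/6)_m (5/6)_m / (m!)² · (1−t)^m, where each rational coefficient (p-integral since p ∤ 6) is mapped to 𝔽_p via the canonical ring homomorphism. -/
noncomputable section

open scoped NumberField

namespace Aux

lemma poch_succ (a : ℚ) (n : ℕ) : poch a (n+1) = poch a n * (a + n) :=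
  Finset.prod_range_succ _ _

lemma poch_zero (a : ℚ) : poch a 0 = 1 := Finset.prod_range_zero _

lemma poch_one_eq (n : ℕ) : poch 1 n = n.factorial := by
  induction n with
  | zero => simp [poch_zero]
  | succ n ih => rw [poch_succ, ih, Nat.factorial_succ]; push_cast; ring

lemma hg21_zero : hg21 0 = 1 := by
  simp [hg21, poch_zero]

/-- `I m` : the integer `(6m)!/((3m)!(2m)!m!)`. -/
def I (m : ℕ) : ℕ := (6*m).choose (3*m) * (3*m).choose m

lemma I_cast (m : ℕ) :
    I m * ((3*m).factorial * ((2*m).factorial * m.factorial)) = (6*m).factorial := by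
  have h1 : (6*m).choose (3*m) * (3*m).factorial * (3*m).factorial = (6*m).factorial := by
    have := Nat.choose_mul_factorial_mul_factorial (show 3*m ≤ 6*m by omega)
    rwa [show 6*m - 3*m = 3*m by omega] at this
  have h2 : (3*m).choose m * m.factorial * (2*m).factorial = (3*m).factorial := by
    have := Nat.choose_mul_factorial_mul_factorial (show m ≤ 3*m by omega)
    rwa [show 3*m - m = 2*m by omega] at this
  calc I m * ((3*m).factorial * ((2*m).factorial * m.factorial))
      = ((6*m).choose (3*m) * (3*m).factorial) * ((3*m).choose m * m.factorial * (2*m).factorial) := by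
        unfold I; ring
    _ = (6*m).factorial := by rw [h2]; exact h1

lemma e1 (m : ℕ) : hg21 (m+1) * ((m+1 : ℚ)*(m+1)) = hg21 m * ((1/6+m)*(5/6+m)) := by
  have hf : ((m.factorial : ℚ)) ≠ 0 := Nat.cast_ne_zero.mpr (Nat.factorial_ne_zero m)
  have hm1 : ((m:ℚ)+1) ≠ 0 := by positivity
  unfold hg21
  rw [poch_succ, poch_succ, poch_succ, poch_one_eq, Nat.factorial_succ]
  push_cast
  field_simp
  ring

lemma hg21_mul (m : ℕ) :
    hg21 m * (432^m * ((3*m).factorial * ((2*m).factorial * m.factorial))) =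
      ((6*m).factorial : ℚ) := by
  induction m with
  | zero => simp [hg21_zero]
  | succ m ih =>
    have hm1 : ((m:ℚ)+1) ≠ 0 := by positivity
    have key := e1 m
    apply mul_right_cancel₀ (mul_ne_zero hm1 hm1)
    rw [show 3*(m+1) = 3*m+1+1+1 by omega, show 2*(m+1) = 2*m+1+1 by omega,
        show 6*(m+1) = 6*m+1+1+1+1+1+1 by omega]
    simp only [Nat.factorial_succ]
    push_cast
    linear_combination (((1:ℚ)/6+m)*(5/6+m)*432*(3*m+1+1+1)*(3*m+1+1)*(3*m+1)*(2*m+1+1)*(2*m+1)*(m+1)) * ih +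
      (432^(m+1) * ((3*(m:ℚ)+1+1+1)*((3*m+1+1))*((3*m+1))*((3*m).factorial) * (((2*m+1+1))*((2*m+1))*((2*m).factorial) * ((m+1)*(m.factorial))))) * key

lemma hg21_eq432 (m : ℕ) : hg21 m * 432^m = (I m : ℚ) := by
  have h := hg21_mul m
  have h2 := I_cast m
  have hne : ((3*m).factorial : ℚ) * ((2*m).factorial * m.factorial) ≠ 0 := by
    positivity
  apply mul_right_cancel₀ hne
  rw [mul_assoc, h]
  exact_mod_cast h2.symm

lemma e2 (m : ℕ) : hg21 (m+1) * (36*((m:ℚ)+1)^2) = hg21 m * ((6*m+1)*(6*m+5)) := by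
  have := e1 m
  linear_combination (36:ℚ) * this

lemma Irec_Q (m : ℕ) :
    (I (m+1) : ℚ) * (36*((m:ℚ)+1)^2) = (I m : ℚ) * ((6*m+1)*(6*m+5)*432) := by
  have ha := hg21_eq432 (m+1)
  have hb := hg21_eq432 m
  have hc := e2 m
  linear_combination (-(36*((m:ℚ)+1)^2)) * ha + ((6*(m:ℚ)+1)*(6*m+5)*432) * hb +
    (432:ℚ)^(m+1) * hc

lemma Irec (m : ℕ) : I (m+1) * (36*(m+1)^2) = I m * ((6*m+1)*(6*m+5)*432) := by
  have := Irec_Q m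
  exact_mod_cast this

variable {p : ℕ} [hp : Fact p.Prime]

/-- cast helper -/
lemma ratCast_mul_natCast (q : ℚ) (a b : ℕ) (h : q * b = a) (hb : (b : ZMod p) ≠ 0) :
    (q : ZMod p) * b = a := by
  -- integer identity
  have hdenQ : ((q.den : ℚ)) ≠ 0 := Nat.cast_ne_zero.mpr q.den_nz
  have key : (q.num : ℚ) * b = (a : ℚ) * q.den := by
    rw [← Rat.num_div_den q] at h
    field_simp at h
    push_cast at h ⊢
    linarith
  have keyZ : q.num * (b : ℤ) = (a : ℤ) * (q.den : ℤ) := by exact_mod_cast key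
  -- den divides b
  have hdvd : q.den ∣ b := by
    have h1 : (q.den : ℤ) ∣ q.num * b := ⟨a, by linarith [keyZ]⟩
    have h2 : q.den ∣ q.num.natAbs * b := by
      have := Int.natAbs_dvd_natAbs.mpr h1
      simpa [Int.natAbs_mul] using this
    exact (Nat.Coprime.dvd_of_dvd_mul_left (Nat.Coprime.symm q.reduced) h2)
  have hden : ((q.den : ZMod p)) ≠ 0 := by
    intro h0
    apply hb
    have hpd : p ∣ q.den := (ZMod.natCast_eq_zero_iff _ _).mp h0
    exact (ZMod.natCast_eq_zero_iff _ _).mpr (hpd.trans hdvd)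
  have keyP : (q.num : ZMod p) * (b : ZMod p) = (a : ZMod p) * (q.den : ZMod p) := by
    exact_mod_cast congrArg (Int.cast : ℤ → ZMod p) keyZ
  rw [Rat.cast_def]
  field_simp
  linear_combination keyP

lemma p_not_dvd_432 (hp6 : ¬ p ∣ 6) : (432 : ZMod p) ≠ 0 := by
  have : ((432 : ℕ) : ZMod p) ≠ 0 := by
    rw [Ne, ZMod.natCast_eq_zero_iff]
    intro hd
    apply hp6
    have h2 : p ∣ 2^4 * 3^3 := by norm_num at hd ⊢; exact hd
    rcases (Nat.Prime.dvd_mul hp.out).mp h2 with h | h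
    · exact dvd_mul_of_dvd_left (hp.out.dvd_of_dvd_pow h) 3
    · exact Dvd.dvd.mul_left (hp.out.dvd_of_dvd_pow h) 2
  exact_mod_cast this

/-- the coefficient in `ZMod p` -/
def cc (p : ℕ) [Fact p.Prime] (m : ℕ) : ZMod p := ((hg21 m : ℚ) : ZMod p)

lemma cc_spec (hp6 : ¬ p ∣ 6) (m : ℕ) : cc p m * (432 : ZMod p)^m = (I m : ZMod p) := by
  have h1 : hg21 m * ((432^m : ℕ) : ℚ) = ((I m : ℕ) : ℚ) := by
    push_cast; exact_mod_cast hg21_eq432 m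
  have h2 : ((432^m : ℕ) : ZMod p) ≠ 0 := by
    push_cast; exact pow_ne_zero _ (p_not_dvd_432 hp6)
  have h := ratCast_mul_natCast _ _ _ h1 h2
  rw [cc]
  push_cast at h ⊢
  exact h

lemma six_ne (hp6 : ¬ p ∣ 6) : (6 : ZMod p) ≠ 0 := by
  have : ((6 : ℕ) : ZMod p) ≠ 0 := by
    rw [Ne, ZMod.natCast_eq_zero_iff]; exact hp6
  exact_mod_cast this

lemma cc_zero : cc p 0 = 1 := by simp [cc, hg21_zero]

lemma cc_rec (hp6 : ¬ p ∣ 6) (m : ℕ) :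
    cc p (m+1) * (36 * ((m : ZMod p)+1)^2) = cc p m * (((6*m+1)*(6*m+5) : ℕ) : ZMod p) := by
  have hu : (432 : ZMod p) ≠ 0 := p_not_dvd_432 hp6
  have s1 := cc_spec hp6 m
  have s2 := cc_spec hp6 (m+1)
  have hI : ((I (m+1) * (36*(m+1)^2) : ℕ) : ZMod p) = ((I m * ((6*m+1)*(6*m+5)*432) : ℕ) : ZMod p) := by
    rw [Irec m]
  apply mul_right_cancel₀ (pow_ne_zero (m+1) hu)
  push_cast at hI
  calc cc p (m+1) * (36 * ((m : ZMod p)+1)^2) * (432:ZMod p)^(m+1)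
      = (cc p (m+1) * (432:ZMod p)^(m+1)) * (36 * ((m : ZMod p)+1)^2) := by ring
    _ = (I (m+1) : ZMod p) * (36 * ((m : ZMod p)+1)^2) := by rw [s2]
    _ = (I m : ZMod p) * ((6*(m:ZMod p)+1)*(6*(m:ZMod p)+5)*432) := by
        linear_combination hI
    _ = (cc p m * (432:ZMod p)^m) * ((6*(m:ZMod p)+1)*(6*(m:ZMod p)+5)*432) := by rw [s1]
    _ = cc p m * (((6*m+1)*(6*m+5) : ℕ) : ZMod p) * (432:ZMod p)^(m+1) := by
        push_cast; ring

lemma cc_frob (hp6 : ¬ p ∣ 6) (n : ℕ) : cc p (p*n) = cc p n := by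
  have hu : (432 : ZMod p) ≠ 0 := p_not_dvd_432 hp6
  have s1 := cc_spec hp6 (p*n)
  have s2 := cc_spec hp6 n
  have hpow : (432 : ZMod p)^(p*n) = (432 : ZMod p)^n := by
    rw [pow_mul, ZMod.pow_card]
  have lucas : ∀ c d : ℕ, ((c*(p*n)).choose (d*(p*n)) : ZMod p) = ((c*n).choose (d*n) : ZMod p) := by
    intro c d
    rw [show c*(p*n) = p*(c*n) by ring, show d*(p*n) = p*(d*n) by ring]
    have h := Choose.choose_modEq_choose_mod_mul_choose_div_nat
      (n := p*(c*n)) (k := p*(d*n)) (p := p)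
    rw [Nat.mul_mod_right, Nat.mul_mod_right,
      Nat.mul_div_cancel_left _ hp.out.pos, Nat.mul_div_cancel_left _ hp.out.pos] at h
    simpa using (ZMod.natCast_eq_natCast_iff _ _ _).mpr h
  have hI : ((I (p*n) : ℕ) : ZMod p) = ((I n : ℕ) : ZMod p) := by
    unfold I
    push_cast
    rw [lucas 6 3, show 3*(p*n) = 3*(p*n) from rfl]
    have := lucas 3 1
    rw [one_mul, one_mul] at this
    rw [this]
  apply mul_right_cancel₀ (pow_ne_zero n hu)
  rw [s2, ← hpow, s1, hI]

lemma pmod6 (hp6 : ¬ p ∣ 6) : p % 6 = 1 ∨ p % 6 = 5 := by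
  have h2 : ¬ (2 ∣ p) := by
    intro h
    rcases (Nat.Prime.eq_one_or_self_of_dvd hp.out 2 h) with h' | h'
    · omega
    · exact hp6 (h' ▸ (by norm_num))
  have h3 : ¬ (3 ∣ p) := by
    intro h
    rcases (Nat.Prime.eq_one_or_self_of_dvd hp.out 3 h) with h' | h'
    · omega
    · exact hp6 (h' ▸ (by norm_num))
  omega

lemma p_ge_5 (hp6 : ¬ p ∣ 6) : 5 ≤ p := by
  have := hp.out.two_le
  have := pmod6 hp6
  omega

lemma key_dvd (hp6 : ¬ p ∣ 6) : p ∣ (6*((p-1)/6)+1)*(6*((p-1)/6)+5) := by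
  have h5 := p_ge_5 hp6
  rcases pmod6 hp6 with h | h
  · have : 6*((p-1)/6)+1 = p := by omega
    rw [this]; exact dvd_mul_right p _
  · have : 6*((p-1)/6)+5 = p := by omega
    rw [this]; exact dvd_mul_left p _

lemma natCast_ne_zero_of_lt {j : ℕ} (h0 : 0 < j) (h1 : j < p) : ((j : ℕ) : ZMod p) ≠ 0 := by
  rw [Ne, ZMod.natCast_eq_zero_iff]
  intro h
  have := Nat.le_of_dvd h0 h
  omega

lemma unit_ne (hp6 : ¬ p ∣ 6) {j : ℕ} (h1 : j + 1 < p) :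
    (36 : ZMod p) * ((j : ZMod p)+1)^2 ≠ 0 := by
  have h36 : (36 : ZMod p) ≠ 0 := by
    have := six_ne hp6
    intro h
    apply this
    have : (6 : ZMod p) * 6 = 0 := by rw [show (6:ZMod p)*6 = 36 by norm_num, h]
    rcases mul_eq_zero.mp this with h' | h' <;> exact h'
  have hj : ((j : ZMod p)+1) ≠ 0 := by
    have := natCast_ne_zero_of_lt (p := p) (j := j+1) (by omega) h1
    push_cast at this
    exact this
  exact mul_ne_zero h36 (pow_ne_zero 2 hj)

lemma cc_vanish (hp6 : ¬ p ∣ 6) : ∀ j, (p-1)/6 < j → j < p → cc p j = 0 := by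
  intro j
  induction j with
  | zero => omega
  | succ j ih =>
    intro h1 h2
    have hrec := cc_rec hp6 j
    have hz : cc p j * (((6*j+1)*(6*j+5) : ℕ) : ZMod p) = 0 := by
      rcases Nat.lt_or_ge ((p-1)/6) j with h | h
      · rw [ih h (by omega)]; ring
      · have hj : j = (p-1)/6 := by omega
        have : (((6*j+1)*(6*j+5) : ℕ) : ZMod p) = 0 := by
          rw [ZMod.natCast_eq_zero_iff]
          rw [hj]; exact key_dvd hp6
        rw [this]; ring
    rw [hz] at hrec
    exact (mul_eq_zero.mp hrec).resolve_right (unit_ne hp6 h2)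

lemma cc_mul (hp6 : ¬ p ∣ 6) (n : ℕ) : ∀ a, a < p → cc p (a + p*n) = cc p a * cc p n := by
  intro a
  induction a with
  | zero =>
    intro _
    rw [zero_add, cc_frob hp6, cc_zero, one_mul]
  | succ a ih =>
    intro ha
    have ha' : a < p := by omega
    have h1 := cc_rec hp6 (a + p*n)
    rw [show a + p*n + 1 = (a+1) + p*n by ring] at h1
    have hcast1 : ((a + p*n : ℕ) : ZMod p) = (a : ZMod p) := by
      push_cast; rw [ZMod.natCast_self]; ring
    have hcast2 : (((6*(a+p*n)+1)*(6*(a+p*n)+5) : ℕ) : ZMod p)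
        = (((6*a+1)*(6*a+5) : ℕ) : ZMod p) := by
      push_cast; rw [ZMod.natCast_self]; ring
    rw [hcast1, hcast2] at h1
    have h2 := cc_rec hp6 a
    have hU := unit_ne hp6 (j := a) ha
    apply mul_right_cancel₀ hU
    rw [h1, ih ha']
    linear_combination (-(cc p n)) * h2

lemma cc_eq_choose (hp6 : ¬ p ∣ 6) :
    ∀ m, m ≤ (p-1)/6 → cc p m = ((((p-1)/6).choose m * (p-1-(p-1)/6).choose m : ℕ) : ZMod p) := by
  set N := (p-1)/6 with hN
  set B := p-1-N with hB
  have h5 := p_ge_5 hp6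
  have h6N : 6*N ≤ p-1 := by omega
  have hNB : N ≤ B := by omega
  have hBp : B < p := by omega
  have hcastB : (B : ZMod p) = -1 - (N : ZMod p) := by
    have h1 : ((p-1 : ℕ) : ZMod p) = -1 := by
      have : ((p-1 : ℕ) : ZMod p) = ((p : ℕ) : ZMod p) - 1 := by
        push_cast [Nat.cast_sub (by omega : 1 ≤ p)]; ring
      rw [this, ZMod.natCast_self]; ring
    rw [hB, Nat.cast_sub (by omega : N ≤ p-1), h1]
  -- dichotomy
  have hzero : ((6*(N:ZMod p)+1)*(6*(N:ZMod p)+5)) = 0 := by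
    have : (((6*N+1)*(6*N+5) : ℕ) : ZMod p) = 0 := by
      rw [ZMod.natCast_eq_zero_iff]; exact key_dvd hp6
    push_cast at this
    linear_combination this
  intro m
  induction m with
  | zero => intro _; simp [cc_zero]
  | succ m ih =>
    intro hm
    have hm' : m ≤ N := by omega
    have ihm := ih hm'
    have h1 := cc_rec hp6 m
    have claim : (((6*m+1)*(6*m+5) : ℕ) : ZMod p) = 36 * ((N - m : ℕ) : ZMod p) * ((B - m : ℕ) : ZMod p) := by
      have e1 : ((N - m : ℕ) : ZMod p) = (N : ZMod p) - m := by
        rw [Nat.cast_sub hm']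
      have e2 : ((B - m : ℕ) : ZMod p) = -1 - (N : ZMod p) - m := by
        rw [Nat.cast_sub (le_trans hm' hNB), hcastB]
      rcases mul_eq_zero.mp hzero with h | h
      · rw [e1, e2]; push_cast
        linear_combination (6*(N:ZMod p)+5) * h
      · rw [e1, e2]; push_cast
        linear_combination (6*(N:ZMod p)+1) * h
    rw [claim, ihm] at h1
    have hups : ((N.choose m * (N-m) : ℕ) : ZMod p) = ((N.choose (m+1) * (m+1) : ℕ) : ZMod p) := by
      rw [← Nat.choose_succ_right_eq]
    have hups2 : ((B.choose m * (B-m) : ℕ) : ZMod p) = ((B.choose (m+1) * (m+1) : ℕ) : ZMod p) := by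
      rw [← Nat.choose_succ_right_eq]
    have hU := unit_ne hp6 (j := m) (by omega : m + 1 < p)
    apply mul_right_cancel₀ hU
    rw [h1]
    push_cast at hups hups2 ⊢
    linear_combination (36*(((B - m : ℕ)) : ZMod p) * ((B.choose m : ℕ) : ZMod p)) * hups +
      (36*((N.choose (m+1) : ℕ) : ZMod p)*((m:ZMod p)+1)) * hups2

lemma neg_one_pow_congr {R : Type*} [Monoid R] [HasDistribNeg R] (a b : ℕ) (h : a % 2 = b % 2) :
    (-1 : R)^a = (-1)^b := by
  conv_lhs => rw [← Nat.div_add_mod a 2]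
  conv_rhs => rw [← Nat.div_add_mod b 2]
  rw [pow_add, pow_add, pow_mul, pow_mul, neg_one_sq, one_pow, one_pow, h]

lemma choose_reflect (k j : ℕ) (h : k + j ≤ p - 1) :
    (((p-1-k).choose j : ℕ) : ZMod p) = (-1)^j * (((k+j).choose j : ℕ) : ZMod p) := by
  have h5 : 2 ≤ p := hp.out.two_le
  induction j with
  | zero => simp
  | succ j ih =>
    have hj' : k + j ≤ p - 1 := by omega
    have ihj := ih hj'
    have hj1 : ((j+1 : ℕ) : ZMod p) ≠ 0 := natCast_ne_zero_of_lt (by omega) (by omega)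
    have r1 : (p-1-k).choose (j+1) * (j+1) = (p-1-k).choose j * (p-1-k-j) :=
      Nat.choose_succ_right_eq _ _
    have r2 : (k+j+1) * ((k+j).choose j) = (k+j+1).choose (j+1) * (j+1) :=
      Nat.add_one_mul_choose_eq (k+j) j
    have hsub : ((p-1-k-j : ℕ) : ZMod p) = -(1+(k:ZMod p)+j) := by
      rw [show p-1-k-j = p - (1+k+j) by omega, Nat.cast_sub (by omega : 1+k+j ≤ p),
        ZMod.natCast_self]
      push_cast; ring
    have c1 : (((p-1-k).choose (j+1) : ℕ) : ZMod p) * ((j:ZMod p)+1)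
        = (((p-1-k).choose j : ℕ) : ZMod p) * ((p-1-k-j : ℕ) : ZMod p) := by
      have := congrArg (fun t : ℕ => (t : ZMod p)) r1
      push_cast at this
      linear_combination this
    have c2 : ((k:ZMod p)+j+1) * (((k+j).choose j : ℕ) : ZMod p)
        = (((k+j+1).choose (j+1) : ℕ) : ZMod p) * ((j:ZMod p)+1) := by
      have := congrArg (fun t : ℕ => (t : ZMod p)) r2
      push_cast at this
      linear_combination this
    have hgoal : (((p-1-k).choose (j+1) : ℕ) : ZMod p) * ((j:ZMod p)+1)
        = ((-1)^(j+1) * (((k+(j+1)).choose (j+1) : ℕ) : ZMod p)) * ((j:ZMod p)+1) := by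
      rw [c1, ihj, hsub, show k+(j+1) = k+j+1 by omega]
      linear_combination (-(1:ZMod p))^(j+1) * c2
    have hj1' : ((j:ZMod p)+1) ≠ 0 := by push_cast at hj1; exact hj1
    exact mul_right_cancel₀ hj1' hgoal

open Finset in
lemma vdm (N B k : ℕ) (hk : k ≤ N) :
    ∑ m ∈ Finset.range (N+1), N.choose m * B.choose m * m.choose k
      = N.choose k * (N-k+B).choose N := by
  have hterm : ∀ m ∈ range (N+1),
      N.choose m * B.choose m * m.choose k
        = N.choose k * ((N-k).choose (N-m) * B.choose m) := by
    intro m hm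
    have hmN : m ≤ N := by simpa [Nat.lt_succ_iff] using hm
    rcases Nat.lt_or_ge m k with h | h
    · rw [Nat.choose_eq_zero_of_lt h, Nat.choose_eq_zero_of_lt (show N-k < N-m by omega)]
      ring
    · have h1 : N.choose m * m.choose k = N.choose k * (N-k).choose (m-k) :=
        Nat.choose_mul (n := N) h
      have h2 : (N-k).choose (N-m) = (N-k).choose (m-k) := by
        have := Nat.choose_symm (show m-k ≤ N-k by omega)
        rwa [show N-k-(m-k) = N-m by omega] at this
      calc N.choose m * B.choose m * m.choose k
          = (N.choose m * m.choose k) * B.choose m := by ring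
        _ = N.choose k * (N-k).choose (m-k) * B.choose m := by rw [h1]
        _ = N.choose k * ((N-k).choose (N-m) * B.choose m) := by rw [h2]; ring
  rw [Finset.sum_congr rfl hterm, ← Finset.mul_sum]
  congr 1
  rw [Nat.add_choose_eq, Finset.Nat.sum_antidiagonal_eq_sum_range_succ_mk, ← Finset.sum_range_reflect]
  apply Finset.sum_congr rfl
  intro m hm
  have hmN : m ≤ N := by simpa [Nat.lt_succ_iff] using hm
  simp only [Nat.succ_sub_one]
  rw [show N - (N - m) = m by omega]

open Polynomial in
lemma coeff_one_sub_pow {R : Type*} [CommRing R] (m k : ℕ) :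
    ((1 - X : R[X])^m).coeff k = (-1)^k * (m.choose k : R) := by
  have h : (1 - X : R[X]) = -(X + C (-1)) := by
    rw [show C (-1 : R) = -1 by simp]; ring
  rw [h, neg_pow, show ((-1:R[X])^m) = C ((-1)^m) by simp, Polynomial.coeff_C_mul,
    Polynomial.coeff_X_add_C_pow]
  rcases le_or_gt k m with hkm | hkm
  · rw [← mul_assoc, ← pow_add, neg_one_pow_congr (m+(m-k)) k (by omega)]
  · rw [Nat.choose_eq_zero_of_lt hkm]
    simp

open Polynomial Finset in
lemma base (hp6 : ¬ p ∣ 6) :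
    ∑ m ∈ range ((p-1)/6 + 1), C (cc p m) * X^m
      = (-1)^((p-1)/2) * ∑ m ∈ range ((p-1)/6 + 1), C (cc p m) * (1-X)^m := by
  have h5 := p_ge_5 hp6
  have hp6' := pmod6 hp6
  set N := (p-1)/6 with hN
  set B := p-1-N with hB
  have h6N : 6*N ≤ p-1 := by omega
  ext k
  rw [show ((-1 : (ZMod p)[X])^((p-1)/2)) = C ((-1)^((p-1)/2)) by simp,
    Polynomial.finset_sum_coeff, Polynomial.coeff_C_mul, Polynomial.finset_sum_coeff]
  simp only [Polynomial.coeff_C_mul, Polynomial.coeff_X_pow, coeff_one_sub_pow,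
    mul_ite, mul_one, mul_zero]
  rw [Finset.sum_ite_eq]
  rcases le_or_gt k N with hk | hk
  · rw [if_pos (by simpa [Nat.lt_succ_iff] using hk)]
    have hsum : ∑ m ∈ range (N+1), cc p m * ((-1:ZMod p)^k * ((m.choose k : ℕ) : ZMod p))
        = (-1:ZMod p)^k * (((N.choose k * (N-k+B).choose N : ℕ)) : ZMod p) := by
      rw [← vdm N B k hk]
      push_cast
      rw [Finset.mul_sum]
      apply Finset.sum_congr rfl
      intro m hm
      rw [cc_eq_choose hp6 m (by simpa [Nat.lt_succ_iff] using hm)]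
      push_cast
      ring
    rw [hsum, show N-k+B = p-1-k by omega, cc_eq_choose hp6 k hk]
    have hBr := choose_reflect (p := p) N k (by omega)
    rw [← hB] at hBr
    have hNr := choose_reflect (p := p) k N (by omega)
    have hsymm : (N+k).choose k = (N+k).choose N := by
      have := Nat.choose_symm (show N ≤ N+k by omega)
      rwa [show N+k-N = k by omega] at this
    have hsign : (-1:ZMod p)^((p-1)/2) * (-1)^N = 1 := by
      rw [← pow_add, neg_one_pow_congr ((p-1)/2+N) 0 (by omega), pow_zero]
    push_cast
    rw [hBr, hNr, show k+N = N+k by omega, show ((N+k).choose N : ZMod p) = ((N+k).choose k : ZMod p) by exact_mod_cast congrArg (fun t : ℕ => (t : ZMod p)) hsymm.symm]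
    linear_combination (-((-1:ZMod p)^k * ((N.choose k : ℕ) : ZMod p) * (((N+k).choose k : ℕ) : ZMod p))) * hsign
  · rw [if_neg (by simp [Nat.lt_succ_iff]; omega)]
    rw [Finset.sum_eq_zero, mul_zero]
    intro m hm
    have hmN : m ≤ N := by simpa [Nat.lt_succ_iff] using hm
    have hmk : m < k := by omega
    rw [Nat.choose_eq_zero_of_lt hmk]
    push_cast
    ring

lemma pow_mod6 (hp6 : ¬ p ∣ 6) (l : ℕ) : p^l % 6 = 1 ∨ p^l % 6 = 5 := by
  induction l with
  | zero => left; rfl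
  | succ l ih =>
    rw [pow_succ, Nat.mul_mod]
    rcases ih with h | h <;> rcases pmod6 hp6 with h' | h' <;> rw [h, h'] <;> norm_num

lemma Marith (hp6 : ¬ p ∣ 6) (l : ℕ) :
    (p-1)/6 + p * ((p^l-1)/6) ≤ (p^(l+1)-1)/6 ∧ (p^(l+1)-1)/6 < p * ((p^l-1)/6 + 1) := by
  have h5 := p_ge_5 hp6
  have hd := pmod6 hp6
  have hx := pow_mod6 hp6 l
  have hx1 : 1 ≤ p^l := Nat.one_le_pow _ _ (by omega)
  have hG : p * ((p^l-1)/6 + 1) = p * ((p^l-1)/6) + p := by ring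
  have F : p * (p^l % 6) + 6 * (p * ((p^l-1)/6)) = p^(l+1) := by
    calc p * (p^l % 6) + 6 * (p * ((p^l-1)/6)) = p * (p^l % 6 + 6*((p^l-1)/6)) := by ring
      _ = p * p^l := by rw [show p^l % 6 + 6*((p^l-1)/6) = p^l by omega]
      _ = p^(l+1) := by rw [pow_succ]; ring
  have hqm : p^(l+1) % 6 = (p % 6) * (p^l % 6) % 6 := by
    rw [pow_succ, mul_comm (p^l) p, Nat.mul_mod]
  rw [hG]
  obtain ⟨r, hr⟩ : ∃ r, p * ((p^l-1)/6) = r := ⟨_, rfl⟩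
  rw [hr] at F ⊢
  rcases hx with hx | hx <;> rw [hx] at F <;> omega

lemma pm_one_pow_odd {R : Type*} [Monoid R] [HasDistribNeg R] (e n : ℕ) (hn : Odd n) :
    ((-1:R)^e)^n = (-1)^e := by
  rcases Nat.even_or_odd e with he | he
  · rw [he.neg_one_pow, one_pow]
  · rw [he.neg_one_pow, hn.neg_one_pow]

lemma p_odd (hp6 : ¬ p ∣ 6) : Odd p := by
  have := pmod6 hp6
  rcases this with h | h <;> exact Nat.odd_iff.mpr (by omega)

open Polynomial in
lemma sign_step (hp6 : ¬ p ∣ 6) (l : ℕ) :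
    (-1 : (ZMod p)[X])^((p^(l+1)-1)/2) = (-1)^((p-1)/2) * (-1)^((p^l-1)/2) := by
  have h5 := p_ge_5 hp6
  have hpo := Nat.odd_iff.mp (p_odd hp6)
  have hxo : p^l % 2 = 1 := Nat.odd_iff.mp ((p_odd hp6).pow)
  have hx1 : 1 ≤ p^l := Nat.one_le_pow _ _ (by omega)
  have hxq : p^l ≤ p^(l+1) := Nat.pow_le_pow_right (by omega) (by omega)
  have h2s : 2 * ((p-1)/2 * p^l) = p^(l+1) - p^l := by
    calc 2 * ((p-1)/2 * p^l) = (2*((p-1)/2)) * p^l := by ring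
      _ = (p-1) * p^l := by rw [show 2*((p-1)/2) = p-1 by omega]
      _ = p^(l+1) - p^l := by rw [Nat.sub_mul, one_mul, pow_succ, mul_comm (p^l) p]
  have key : (p^(l+1)-1)/2 = ((p-1)/2) * p^l + (p^l-1)/2 := by
    obtain ⟨s, hs⟩ : ∃ s, (p-1)/2 * p^l = s := ⟨_, rfl⟩
    rw [hs] at h2s ⊢
    omega
  rw [key, pow_add, pow_mul, pm_one_pow_odd _ _ ((p_odd hp6).pow)]

open Polynomial Finset in
lemma keyK (hp6 : ¬ p ∣ 6) (l : ℕ) :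
    (∑ m ∈ range ((p^(l+1)-1)/6 + 1), C (cc p m) * X^m)
      = (∑ m ∈ range ((p-1)/6 + 1), C (cc p m) * X^m) *
        (∑ m ∈ range ((p^l-1)/6 + 1), C (cc p m) * X^m)^p := by
  have h5 := p_ge_5 hp6
  obtain ⟨hA, hB⟩ := Marith hp6 l
  have hfrob : (∑ m ∈ range ((p^l-1)/6 + 1), C (cc p m) * X^m)^p
      = ∑ n ∈ range ((p^l-1)/6 + 1), C (cc p n) * X^(p*n) := by
    rw [sum_pow_char]
    apply Finset.sum_congr rfl
    intro n _
    rw [mul_pow, ← map_pow, ZMod.pow_card, ← pow_mul, mul_comm n p]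
  rw [hfrob, Finset.sum_mul_sum]
  have hterm : ∀ a ∈ range ((p-1)/6 + 1), ∀ n ∈ range ((p^l-1)/6 + 1),
      (C (cc p a) * X^a) * (C (cc p n) * X^(p*n)) = C (cc p (a + p*n)) * X^(a+p*n) := by
    intro a ha n _
    have haP : a < p := by
      have : a ≤ (p-1)/6 := by simpa [Nat.lt_succ_iff] using ha
      omega
    rw [cc_mul hp6 n a haP, map_mul, pow_add]
    ring
  rw [Finset.sum_congr rfl (fun a ha => Finset.sum_congr rfl (fun n hn => hterm a ha n hn))]
  rw [← Finset.sum_product']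
  -- now RHS is over (range (M1+1)) ×ˢ (range (Ml+1)) of g (x.1 + p * x.2)
  have hinj : ∀ x ∈ (range ((p-1)/6 + 1)) ×ˢ (range ((p^l-1)/6 + 1)),
      ∀ y ∈ (range ((p-1)/6 + 1)) ×ˢ (range ((p^l-1)/6 + 1)),
      x.1 + p * x.2 = y.1 + p * y.2 → x = y := by
    intro x hx y hy h
    simp only [Finset.mem_product, Finset.mem_range, Nat.lt_succ_iff] at hx hy
    have hx1 : x.1 < p := by omega
    have hy1 : y.1 < p := by omega
    have e1 : x.1 = y.1 := by
      have := congrArg (fun t => t % p) h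
      simpa [Nat.add_mul_mod_self_left, Nat.mod_eq_of_lt hx1, Nat.mod_eq_of_lt hy1] using this
    have e2 : x.2 = y.2 := Nat.eq_of_mul_eq_mul_left (by omega : 0 < p) (by omega)
    exact Prod.ext e1 e2
  rw [← Finset.sum_image (f := fun m => C (cc p m) * X^m)
    (g := fun x : ℕ × ℕ => x.1 + p * x.2) hinj]
  apply (Finset.sum_subset ?_ ?_).symm
  · intro m hm
    simp only [Finset.mem_image, Finset.mem_product, Finset.mem_range, Nat.lt_succ_iff] at hm
    obtain ⟨⟨a, n⟩, ⟨ha, hn⟩, rfl⟩ := hm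
    simp only [Finset.mem_range, Nat.lt_succ_iff]
    have : p * n ≤ p * ((p^l-1)/6) := Nat.mul_le_mul_left p hn
    omega
  · intro m hm hnotin
    have hmle : m ≤ (p^(l+1)-1)/6 := by simpa [Nat.lt_succ_iff] using hm
    have hdiv : m / p ≤ (p^l-1)/6 := by
      have : m < p * ((p^l-1)/6 + 1) := by omega
      have := Nat.div_lt_of_lt_mul this
      omega
    have hmod : (p-1)/6 < m % p := by
      by_contra hcon
      apply hnotin
      simp only [Finset.mem_image, Finset.mem_product, Finset.mem_range, Nat.lt_succ_iff]
      exact ⟨(m % p, m / p), ⟨by omega, hdiv⟩, Nat.mod_add_div m p⟩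
    have hz : cc p m = 0 := by
      have hdecomp : m = m % p + p * (m / p) := (Nat.mod_add_div m p).symm
      rw [hdecomp, cc_mul hp6 (m/p) (m%p) (Nat.mod_lt m (by omega)),
        cc_vanish hp6 (m % p) hmod (Nat.mod_lt m (by omega))]
      ring
    rw [hz, map_zero, zero_mul]

open Polynomial Finset in
lemma comp_sum (r : ℕ) :
    (∑ m ∈ range (r+1), C (cc p m) * X^m).comp (1-X)
      = ∑ m ∈ range (r+1), C (cc p m) * (1-X)^m := by
  simp only [Polynomial.comp, Polynomial.eval₂_finset_sum, Polynomial.eval₂_mul,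
    Polynomial.eval₂_C, Polynomial.eval₂_X_pow]

open Polynomial Finset in
lemma Qlem (hp6 : ¬ p ∣ 6) (l : ℕ) :
    (∑ m ∈ range ((p^l-1)/6 + 1), C (cc p m) * X^m).comp (1-X)
      = (-1)^((p^l-1)/2) * ∑ m ∈ range ((p^l-1)/6 + 1), C (cc p m) * X^m := by
  induction l with
  | zero =>
    norm_num
  | succ l ih =>
    have hb := base hp6
    have hb' : (∑ m ∈ range ((p-1)/6+1), C (cc p m) * X^m).comp (1-X)
        = (-1)^((p-1)/2) * ∑ m ∈ range ((p-1)/6+1), C (cc p m) * X^m := by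
      rw [comp_sum]
      have hsq : ((-1 : (ZMod p)[X])^((p-1)/2)) * ((-1)^((p-1)/2)) = 1 := by
        rw [← pow_add, neg_one_pow_congr ((p-1)/2+(p-1)/2) 0 (by omega), pow_zero]
      linear_combination (-((-1: (ZMod p)[X])^((p-1)/2))) * hb +
        (-(∑ m ∈ range ((p-1)/6+1), C (cc p m) * (1-X)^m)) * hsq
    rw [keyK hp6 l, Polynomial.mul_comp, Polynomial.pow_comp, hb', ih, mul_pow,
      pm_one_pow_odd _ _ (p_odd hp6), sign_step hp6 l]
    ring

end Aux

open Polynomial in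
/-- **Proposition 5.3.** Let `p ∤ 6` be a prime, `l ≥ 1` and `M = ⌊(p^l - 1)/6⌋`. Then in
`𝔽_p[t]`,
`Σ_{m≤M} (1/6)_m (5/6)_m/(m!)² tᵐ = (-1)^((p^l-1)/2) Σ_{m≤M} (1/6)_m (5/6)_m/(m!)² (1-t)ᵐ`. -/
theorem statement12 (p : ℕ) [Fact p.Prime] (hp6 : ¬p ∣ 6) (l : ℕ) (hl : 0 < l) :
    ∑ m ∈ Finset.range ((p ^ l - 1) / 6 + 1), C ((hg21 m : ℚ) : ZMod p) * X ^ m =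
      (-1) ^ ((p ^ l - 1) / 2) *
        ∑ m ∈ Finset.range ((p ^ l - 1) / 6 + 1),
          C ((hg21 m : ℚ) : ZMod p) * (1 - X) ^ m := by
  have hc : ∀ m : ℕ, ((hg21 m : ℚ) : ZMod p) = Aux.cc p m := fun _ => rfl
  simp only [hc]
  rw [← Aux.comp_sum, Aux.Qlem hp6 l, ← mul_assoc, ← pow_add,
    Aux.neg_one_pow_congr ((p^l-1)/2+(p^l-1)/2) 0 (by omega), pow_zero, one_mul]


end
end

section
/- Let p be a rational prime and l a positive integer. Let a be a p-adic integer with v_p(a) = 0, and let [−a]₀ denote the unique integer with 0 ≤ [−a]₀ < p^l and −a ≡ [−a]₀ (mod p^l). Then for every integer r with 0 ≤ r ≤ [−a]₀, the p-adic integer (−1)^r · (a)_r / r! is congruent modulo p to the binomial coefficient binom([−a]₀, r), i.e., (−1)^r (a)_r / r! ≡ binom([−a]₀, r) (mod pℤ_p). -/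
noncomputable section

open scoped NumberField

lemma aux_not_dvd_cast {p : ℕ} [Fact p.Prime] {k : ℕ} (hk : ¬ p ∣ k) :
    ¬ (p : ℤ_[p]) ∣ (k : ℤ_[p]) := by
  intro h
  apply hk
  have h1 : ‖((k : ℤ) : ℤ_[p])‖ < 1 := by
    push_cast
    exact (PadicInt.norm_lt_one_iff_dvd _).mpr h
  exact_mod_cast (PadicInt.norm_int_lt_one_iff_dvd (k : ℤ)).mp h1

lemma aux_asc_eval_prod {p : ℕ} [Fact p.Prime] (a : ℤ_[p]) (r : ℕ) :
    (ascPochhammer ℤ_[p] r).eval a = ∏ i ∈ Finset.range r, (a + i) := by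
  induction r with
  | zero => simp
  | succ n ih => rw [ascPochhammer_succ_eval, Finset.prod_range_succ, ih]

lemma aux_choose_dvd {p : ℕ} [Fact p.Prime] {l : ℕ} {t : ℤ_[p]}
    (ht : (p : ℤ_[p]) ^ l ∣ t) {j : ℕ} (hj : j ≠ 0) (hjl : j < p ^ l) :
    (p : ℤ_[p]) ∣ Ring.choose t j := by
  have hp : p.Prime := Fact.out
  set v := (Nat.factorization j) p with hv
  set j' := j / p ^ v with hj'
  have hvl : v < l := by
    have h1 : p ^ v ≤ j := Nat.le_of_dvd (Nat.pos_of_ne_zero hj) (Nat.ordProj_dvd j p)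
    exact (Nat.pow_lt_pow_iff_right hp.one_lt).mp (lt_of_le_of_lt h1 hjl)
  have hj'nd : ¬ p ∣ j' := Nat.not_dvd_ordCompl hp hj
  have hjj : p ^ v * j' = j := Nat.ordProj_mul_ordCompl_eq_self j p
  have key : (j : ℤ_[p]) * Ring.choose t j = t * Ring.choose (t - 1) (j - 1) := by
    have h := Ring.choose_smul_choose t (n := j) (k := 1) (Nat.one_le_iff_ne_zero.mpr hj)
    rw [Nat.choose_one_right, Ring.choose_one_right, nsmul_eq_mul] at h
    simpa using h
  obtain ⟨u, hu⟩ := ht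
  have h2 : (p : ℤ_[p]) ^ v * ((j' : ℤ_[p]) * Ring.choose t j)
      = (p : ℤ_[p]) ^ v * ((p : ℤ_[p]) ^ (l - v) * (u * Ring.choose (t - 1) (j - 1))) := by
    have hcast : (p : ℤ_[p]) ^ v * (j' : ℤ_[p]) = ((j : ℕ) : ℤ_[p]) := by
      rw [← hjj]; push_cast; ring
    calc (p : ℤ_[p]) ^ v * ((j' : ℤ_[p]) * Ring.choose t j)
        = ((j : ℕ) : ℤ_[p]) * Ring.choose t j := by rw [← hcast]; ring
      _ = t * Ring.choose (t - 1) (j - 1) := key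
      _ = (p : ℤ_[p]) ^ v * ((p : ℤ_[p]) ^ (l - v) * (u * Ring.choose (t - 1) (j - 1))) := by
          rw [hu, ← mul_assoc, ← mul_assoc, ← pow_add, Nat.add_sub_cancel' hvl.le]
  have hpne : (p : ℤ_[p]) ^ v ≠ 0 :=
    pow_ne_zero _ (Nat.cast_ne_zero.mpr hp.ne_zero)
  have h3 := mul_left_cancel₀ hpne h2
  have hpd : (p : ℤ_[p]) ∣ (j' : ℤ_[p]) * Ring.choose t j := by
    rw [h3]
    exact dvd_mul_of_dvd_left (dvd_pow_self _ (by omega)) _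
  rcases (PadicInt.prime_p.dvd_mul).mp hpd with h | h
  · exact absurd h (aux_not_dvd_cast hj'nd)
  · exact h

/-- **(First display in the proof of Proposition 5.4.)** Let `p` be a prime, `l ≥ 1`, and
`a ∈ ℤ_p` with `v_p(a) = 0`. Let `[-a]₀` be the unique integer `A` with `0 ≤ A < p^l` and
`-a ≡ A (mod p^l)`. Then for all `0 ≤ r ≤ A`,
`(-1)^r (a)_r/r! ≡ binom(A, r) (mod p ℤ_p)`. -/
theorem statement16 (p : ℕ) [Fact p.Prime] (l : ℕ) (hl : 0 < l)
    (a : ℤ_[p]) (ha : ¬(p : ℤ_[p]) ∣ a)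
    (A : ℕ) (hA : A < p ^ l) (hAa : (p : ℤ_[p]) ^ l ∣ a + (A : ℤ_[p]))
    (r : ℕ) (hr : r ≤ A)
    (c : ℤ_[p]) (hc : c * (r.factorial : ℤ_[p]) = ∏ i ∈ Finset.range r, (a + (i : ℤ_[p]))) :
    (p : ℤ_[p]) ∣ (-1) ^ r * c - (A.choose r : ℤ_[p]) := by
  have hfac : (r.factorial : ℤ_[p]) ≠ 0 := Nat.cast_ne_zero.mpr r.factorial_ne_zero
  have hsq : ((-1 : ℤ_[p]) ^ r) * ((-1 : ℤ_[p]) ^ r) = 1 := by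
    rw [← mul_pow, neg_mul_neg, one_mul, one_pow]
  -- Step A : (-1)^r * c = Ring.choose (-a) r
  have hA1 : Ring.choose (-a) r = (-1) ^ r * c := by
    apply mul_left_cancel₀ hfac
    have hd := Ring.descPochhammer_eq_factorial_smul_choose (-a) r
    have hneg := Polynomial.ascPochhammer_smeval_neg_eq_descPochhammer (-a) r
    rw [neg_neg] at hneg
    rw [Units.smul_def, Int.coe_negOnePow_natCast, zsmul_eq_mul] at hneg
    push_cast at hneg
    have hasc : (ascPochhammer ℕ r).smeval a = c * (r.factorial : ℤ_[p]) := by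
      rw [Polynomial.ascPochhammer_smeval_eq_eval, aux_asc_eval_prod, hc]
    have hdesc : (descPochhammer ℤ r).smeval (-a) = (-1) ^ r * (c * (r.factorial : ℤ_[p])) := by
      rw [← hasc, hneg, ← mul_assoc, hsq, one_mul]
    rw [nsmul_eq_mul] at hd
    rw [← hd, hdesc]
    ring
  rw [← hA1]
  -- Step B : Vandermonde
  set t : ℤ_[p] := -(a + (A : ℤ_[p])) with htdef
  have ht : (p : ℤ_[p]) ^ l ∣ t := (dvd_neg).mpr hAa
  have hat : -a = (A : ℤ_[p]) + t := by rw [htdef]; ring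
  rw [hat, Ring.add_choose_eq r (Commute.all _ _)]
  have hmem : ((r, 0) : ℕ × ℕ) ∈ Finset.HasAntidiagonal.antidiagonal r := by simp
  rw [← Finset.add_sum_erase _ _ hmem, Ring.choose_natCast, Ring.choose_zero_right, mul_one,
    add_sub_cancel_left]
  apply Finset.dvd_sum
  intro x hx
  obtain ⟨hne, hmem'⟩ := Finset.mem_erase.mp hx
  have hsum : x.1 + x.2 = r := Finset.HasAntidiagonal.mem_antidiagonal.mp hmem'
  have hx2 : x.2 ≠ 0 := by
    intro h0
    apply hne
    have : x.1 = r := by omega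
    exact Prod.ext this h0
  have hx2l : x.2 < p ^ l := lt_of_le_of_lt (by omega : x.2 ≤ A) hA
  exact Dvd.dvd.mul_left (aux_choose_dvd ht hx2 hx2l) _

end
end
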